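/- arXiv:2109.07579 — 6 statements merged into one kernel-verified Lean document; each statement's English description precedes it below -/
import Mathlib

section
/- Let l ≥ 3 be an integer and let c > 0 be a real number. In ℝ^l set σ = ∑_{1≤i<j≤l} ((ε_i − ε_j) + (ε_i + ε_j)) and τ = ∑_{i=1}^l ε_i, and let Ψ = {ε_1} ∪ {ε_j + ε_{j+1} : 1 ≤ j ≤ l−1}. Then: (i) every element of Ψ is a positive root of B_l and there exist real numbers m_β > 0 (β ∈ Ψ) with σ + c·τ = ∑_{β∈Ψ} m_β·β; (ii) Ψ spans ℝ^l; (iii) for all β, β′ ∈ Ψ (including β = β′), β + β′ ∉ Φ(B_l). -/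
/-- `eps l i` is the standard basis vector of `ℝ^l` with `1`-based index `i`. -/
def eps (l : ℕ) (i : ℕ) : Fin l → ℝ := fun j => if (j : ℕ) + 1 = i then 1 else 0

/-- The root system `Φ(B_l)` in `ℝ^l`: the vectors `±ε_i` (`1 ≤ i ≤ l`) together with
`±ε_i ± ε_j` (`1 ≤ i < j ≤ l`, all four sign choices). -/
def PhiB (l : ℕ) : Set (Fin l → ℝ) :=
  {v | ∃ i, 1 ≤ i ∧ i ≤ l ∧ (v = eps l i ∨ v = -eps l i)} ∪
  {v | ∃ i j, 1 ≤ i ∧ i < j ∧ j ≤ l ∧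
      (v = eps l i + eps l j ∨ v = eps l i - eps l j ∨
       v = -eps l i + eps l j ∨ v = -eps l i - eps l j)}

/-- The positive roots of `B_l`: the `ε_i` and the `ε_i ± ε_j` with `i < j`. -/
def PosB (l : ℕ) : Set (Fin l → ℝ) :=
  {v | ∃ i, 1 ≤ i ∧ i ≤ l ∧ v = eps l i} ∪
  {v | ∃ i j, 1 ≤ i ∧ i < j ∧ j ≤ l ∧ (v = eps l i + eps l j ∨ v = eps l i - eps l j)}

/-- `Ψ = {ε₁} ∪ {ε_j + ε_{j+1} : 1 ≤ j ≤ l-1}`. -/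
noncomputable def PsiB (l : ℕ) : Finset (Fin l → ℝ) :=
  insert (eps l 1) ((Finset.Icc 1 (l - 1)).image fun j => eps l j + eps l (j + 1))

/-!
Write `ψ_j = ε_j + ε_{j+1}` for `0 ≤ j < l`; since `eps l 0 = 0`, `ψ_0 = ε_1` and
`Ψ = {ψ_j}`. The coordinate `i` of `∑ m_j ψ_j` is `m_{i-1} + m_i` (with `m_l = 0`), so (i) asks
for a positive solution of `m_{i-1} + m_i = 2 (l - i) + c`; back-substitution from `m_l = 0`
gives `m_j = l - j` or `l - j - 1 + c` according to the parity of `l - j`.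
(ii) follows from `ε_{j+1} = ψ_j - ε_j`. For (iii), every root has squared length at most `2`,
while `|ψ_j + ψ_k|² ≥ 3`: the `ψ_j` have nonnegative entries, `|ψ_0|² = 1` and `|ψ_j|² = 2`
for `j ≥ 1`.
-/

open Finset

lemma eps_zero (l : ℕ) : eps l 0 = 0 := by
  ext x; simp [eps]

lemma eps_succ (l : ℕ) (x : Fin l) : eps l (x + 1) = Pi.single x 1 := by
  ext k; simp [eps, Pi.single_apply, Fin.ext_iff]

lemma eps_dotProduct_self {l i : ℕ} (h1 : 1 ≤ i) (h2 : i ≤ l) : eps l i ⬝ᵥ eps l i = 1 := by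
  obtain ⟨x, rfl⟩ : ∃ x : Fin l, i = x + 1 := ⟨⟨i - 1, by omega⟩, by simp; omega⟩
  simp [eps_succ]

lemma eps_dotProduct_eps_of_ne {l i j : ℕ} (h : i ≠ j) : eps l i ⬝ᵥ eps l j = 0 := by
  refine Finset.sum_eq_zero fun x _ => ?_
  simp only [eps]
  split_ifs <;> first | omega | simp

lemma dotProduct_self_le_two_of_mem_PhiB {l : ℕ} {v : Fin l → ℝ} (hv : v ∈ PhiB l) :
    v ⬝ᵥ v ≤ 2 := by
  rcases hv with ⟨i, hi, hil, rfl | rfl⟩ | ⟨i, j, hi, hij, hjl, rfl | rfl | rfl | rfl⟩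
  · simp [eps_dotProduct_self hi hil]
  · simp [eps_dotProduct_self hi hil]
  all_goals
    simp only [add_dotProduct, dotProduct_add, sub_dotProduct, dotProduct_sub, neg_dotProduct,
      dotProduct_neg, eps_dotProduct_self hi (by omega : i ≤ l),
      eps_dotProduct_self (by omega : 1 ≤ j) hjl, eps_dotProduct_eps_of_ne hij.ne,
      eps_dotProduct_eps_of_ne hij.ne']
    norm_num

noncomputable def psi (l j : ℕ) : Fin l → ℝ := eps l j + eps l (j + 1)

lemma psi_zero (l : ℕ) : psi l 0 = eps l 1 := by
  simp [psi, eps_zero]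

lemma psi_apply (l j : ℕ) (x : Fin l) :
    psi l j x = (if (x : ℕ) + 1 = j then 1 else 0) + if (x : ℕ) = j then 1 else 0 := by
  simp [psi, eps]

lemma psi_ne_psi_of_lt {l j k : ℕ} (hk : k < l) (hjk : j < k) : psi l j ≠ psi l k := by
  intro h
  have := congrFun h ⟨k, hk⟩
  simp only [psi_apply] at this
  split_ifs at this <;> first | omega | norm_num at this

lemma psi_injOn (l : ℕ) : Set.InjOn (psi l) (range l) := by
  intro j hj k hk h
  simp only [coe_range, Set.mem_Iio] at hj hk
  rcases lt_trichotomy j k with hjk | rfl | hkj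
  · exact absurd h (psi_ne_psi_of_lt hk hjk)
  · rfl
  · exact absurd h.symm (psi_ne_psi_of_lt hj hkj)

lemma PsiB_eq_image_psi {l : ℕ} (hl : 1 ≤ l) : PsiB l = (range l).image (psi l) := by
  have : range l = insert 0 (Icc 1 (l - 1)) := by
    ext j; simp only [mem_range, mem_insert, mem_Icc]; omega
  rw [this, image_insert, psi_zero, PsiB]
  rfl

noncomputable def psiCoeff (l : ℕ) (c : ℝ) (j : ℕ) : ℝ :=
  (l - j : ℕ) + if Even (l - j) then 0 else c - 1

lemma psiCoeff_self (l : ℕ) (c : ℝ) : psiCoeff l c l = 0 := by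
  simp [psiCoeff]

lemma psiCoeff_pos {l j : ℕ} {c : ℝ} (hc : 0 < c) (hj : j < l) : 0 < psiCoeff l c j := by
  have : (1 : ℝ) ≤ (l - j : ℕ) := by exact_mod_cast (by omega : 1 ≤ l - j)
  unfold psiCoeff
  split_ifs <;> linarith

lemma psiCoeff_add_psiCoeff_succ {l j : ℕ} (c : ℝ) (hj : j < l) :
    psiCoeff l c j + psiCoeff l c (j + 1) = 2 * (l - (j + 1) : ℕ) + c := by
  obtain ⟨n, hn, hn'⟩ : ∃ n, l - (j + 1) = n ∧ l - j = n + 1 := ⟨_, rfl, by omega⟩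
  simp only [psiCoeff, hn, hn', Nat.even_add_one]
  split_ifs <;> push_cast <;> ring

lemma sum_smul_eps_apply (l : ℕ) (w : ℕ → ℝ) (x : Fin l) :
    (∑ i ∈ Icc 1 l, w i • eps l i) x = w (x + 1) := by
  simp [Finset.sum_apply, eps, x.isLt]

lemma sum_smul_psi_apply {l : ℕ} (w : ℕ → ℝ) (hw : w l = 0) (x : Fin l) :
    (∑ j ∈ range l, w j • psi l j) x = w x + w (x + 1) := by
  simp only [Finset.sum_apply, Pi.smul_apply, psi_apply, smul_eq_mul, mul_add, mul_ite, mul_one,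
    mul_zero, sum_add_distrib, sum_ite_eq, mem_range, x.isLt, if_true]
  by_cases h : (x : ℕ) + 1 < l
  · rw [if_pos h, add_comm]
  · rw [if_neg h, show (x : ℕ) + 1 = l by omega, hw, zero_add, add_zero]

lemma sigma_add_smul_tau (l : ℕ) (c : ℝ) :
    (∑ i ∈ Icc 1 l, ∑ j ∈ Icc (i + 1) l, ((eps l i - eps l j) + (eps l i + eps l j)))
      + c • (∑ i ∈ Icc 1 l, eps l i)
      = ∑ i ∈ Icc 1 l, (2 * (l - i : ℕ) + c) • eps l i := by
  rw [smul_sum, ← sum_add_distrib]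
  refine sum_congr rfl fun i _ => ?_
  have : ∀ j, (eps l i - eps l j) + (eps l i + eps l j) = (2 : ℝ) • eps l i := fun j => by
    rw [two_smul]; abel
  simp only [this, sum_const, Nat.card_Icc, add_smul, Nat.add_sub_add_right]
  rw [← Nat.cast_smul_eq_nsmul ℝ, smul_smul, mul_comm]

lemma exists_pos_coeffs_PsiB {l : ℕ} {c : ℝ} (hl : 1 ≤ l) (hc : 0 < c) :
    ∃ m : (Fin l → ℝ) → ℝ, (∀ β ∈ PsiB l, 0 < m β) ∧
      (∑ i ∈ Icc 1 l, ∑ j ∈ Icc (i + 1) l, ((eps l i - eps l j) + (eps l i + eps l j)))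
        + c • (∑ i ∈ Icc 1 l, eps l i) = ∑ β ∈ PsiB l, m β • β := by
  set m : (Fin l → ℝ) → ℝ := fun β => psiCoeff l c (Function.invFunOn (psi l) (range l) β)
  have hm : ∀ j ∈ range l, m (psi l j) = psiCoeff l c j := fun j hj =>
    congrArg (psiCoeff l c) ((psi_injOn l).leftInvOn_invFunOn hj)
  refine ⟨m, ?_, ?_⟩
  · rw [PsiB_eq_image_psi hl, forall_mem_image]
    exact fun j hj => (hm j hj).symm ▸ psiCoeff_pos hc (mem_range.1 hj)
  · have hsum : ∑ j ∈ range l, m (psi l j) • psi l j = ∑ j ∈ range l, psiCoeff l c j • psi l j :=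
      sum_congr rfl fun j hj => by rw [hm j hj]
    rw [PsiB_eq_image_psi hl, sum_image (psi_injOn l), hsum, sigma_add_smul_tau]
    ext x
    rw [sum_smul_eps_apply, sum_smul_psi_apply _ (psiCoeff_self l c),
      psiCoeff_add_psiCoeff_succ c x.isLt]

lemma psi_mem_PosB {l j : ℕ} (hj : j < l) : psi l j ∈ PosB l := by
  rcases Nat.eq_zero_or_pos j with rfl | hj0
  · exact Or.inl ⟨1, le_rfl, hj, psi_zero l⟩
  · exact Or.inr ⟨j, j + 1, hj0, j.lt_succ_self, hj, Or.inl rfl⟩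

lemma span_PsiB {l : ℕ} (hl : 1 ≤ l) : Submodule.span ℝ (PsiB l : Set (Fin l → ℝ)) = ⊤ := by
  rw [PsiB_eq_image_psi hl, coe_image]
  have heps : ∀ i ≤ l, eps l i ∈ Submodule.span ℝ (psi l '' range l) := by
    intro i
    induction i with
    | zero => exact fun _ => eps_zero l ▸ Submodule.zero_mem _
    | succ i ih =>
      intro hi
      have hpsi : psi l i ∈ Submodule.span ℝ (psi l '' range l) :=
        Submodule.subset_span ⟨i, by simpa using hi, rfl⟩
      rw [show eps l (i + 1) = psi l i - eps l i by rw [psi]; abel]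
      exact sub_mem hpsi (ih (by omega))
  rw [eq_top_iff, ← (Pi.basisFun ℝ (Fin l)).span_eq, Submodule.span_le]
  rintro _ ⟨x, rfl⟩
  rw [Pi.basisFun_apply, ← eps_succ]
  exact heps _ x.isLt

lemma psi_dotProduct_psi_nonneg (l j k : ℕ) : 0 ≤ psi l j ⬝ᵥ psi l k :=
  sum_nonneg fun x _ => mul_nonneg (by rw [psi_apply]; positivity) (by rw [psi_apply]; positivity)

lemma psi_dotProduct_self {l j : ℕ} (hj : j < l) :
    psi l j ⬝ᵥ psi l j = if j = 0 then 1 else 2 := by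
  rcases Nat.eq_zero_or_pos j with rfl | hj0
  · rw [psi_zero, eps_dotProduct_self le_rfl hj, if_pos rfl]
  · simp only [psi, add_dotProduct, dotProduct_add, eps_dotProduct_self hj0 hj.le,
      eps_dotProduct_self (by omega : 1 ≤ j + 1) hj, eps_dotProduct_eps_of_ne j.succ_ne_self,
      eps_dotProduct_eps_of_ne j.succ_ne_self.symm, if_neg hj0.ne']
    norm_num

lemma three_le_dotProduct_self_psi_add_psi {l j k : ℕ} (hj : j < l) (hk : k < l) :
    3 ≤ (psi l j + psi l k) ⬝ᵥ (psi l j + psi l k) := by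
  rw [add_dotProduct, dotProduct_add, dotProduct_add, dotProduct_comm (psi l k),
    psi_dotProduct_self hj, psi_dotProduct_self hk]
  have := psi_dotProduct_psi_nonneg l j k
  split_ifs with hj0 hk0
  · subst hj0 hk0
    rw [psi_zero, eps_dotProduct_self le_rfl hj]
    norm_num
  all_goals linarith

/-- Let `l ≥ 3` and `c > 0`, `σ = ∑_{1≤i<j≤l} ((ε_i-ε_j)+(ε_i+ε_j))`, `τ = ∑_{i=1}^l ε_i`.
Then (i) every element of `Ψ` is a positive root of `B_l` and `σ + c τ` is a positive
combination of `Ψ`; (ii) `Ψ` spans `ℝ^l`; (iii) no sum of two elements of `Ψ` lies in `Φ(B_l)`. -/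
theorem stmt_3 (l : ℕ) (hl : 3 ≤ l) (c : ℝ) (hc : 0 < c) :
    ((∀ β ∈ PsiB l, β ∈ PosB l) ∧
      ∃ m : (Fin l → ℝ) → ℝ, (∀ β ∈ PsiB l, 0 < m β) ∧
        (∑ i ∈ Finset.Icc 1 l, ∑ j ∈ Finset.Icc (i + 1) l,
            ((eps l i - eps l j) + (eps l i + eps l j)))
          + c • (∑ i ∈ Finset.Icc 1 l, eps l i)
          = ∑ β ∈ PsiB l, m β • β) ∧
    Submodule.span ℝ (PsiB l : Set (Fin l → ℝ)) = ⊤ ∧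
    (∀ β ∈ PsiB l, ∀ β' ∈ PsiB l, β + β' ∉ PhiB l) := by
  have hl₁ : 1 ≤ l := by omega
  refine ⟨⟨?_, exists_pos_coeffs_PsiB hl₁ hc⟩, span_PsiB hl₁, ?_⟩
  · rw [PsiB_eq_image_psi hl₁, forall_mem_image]
    exact fun j hj => psi_mem_PosB (mem_range.1 hj)
  · simp only [PsiB_eq_image_psi hl₁, forall_mem_image, mem_range]
    intro j hj k hk hmem
    linarith [dotProduct_self_le_two_of_mem_PhiB hmem, three_le_dotProduct_self_psi_add_psi hj hk]
end

section
/- Let l ≥ 3 be an integer. In ℝ^l set σ = ∑_{1≤i<j≤l} ((ε_i − ε_j) + (ε_i + ε_j)) and let Ψ = {ε_j + ε_{j+1} : 1 ≤ j ≤ l−1} ∪ {ε_1 − ε_l, ε_1 + ε_l}. Then: (i) every element of Ψ lies in Φ(D_l) and there exist real numbers m_β > 0 (β ∈ Ψ) with σ = ∑_{β∈Ψ} m_β·β; (ii) Ψ spans ℝ^l; (iii)′ for all β, β′ ∈ Ψ (including β = β′), if β + β′ ∈ Φ(D_l) then {β, β′} = {ε_1 − ε_l, ε_{l−1} + ε_l}.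 -/
/-- The root system `Φ(D_l)` in `ℝ^l`: the vectors `±ε_i ± ε_j`
(`1 ≤ i < j ≤ l`, all four sign choices). -/
def PhiD (l : ℕ) : Set (Fin l → ℝ) :=
  {v | ∃ i j, 1 ≤ i ∧ i < j ∧ j ≤ l ∧
      (v = eps l i + eps l j ∨ v = eps l i - eps l j ∨
       v = -eps l i + eps l j ∨ v = -eps l i - eps l j)}

/-- `Ψ = {ε_j + ε_{j+1} : 1 ≤ j ≤ l-1} ∪ {ε_1 - ε_l, ε_1 + ε_l}`. -/
noncomputable def PsiD (l : ℕ) : Finset (Fin l → ℝ) :=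
  ((Finset.Icc 1 (l - 1)).image fun j => eps l j + eps l (j + 1)) ∪
    {eps l 1 - eps l l, eps l 1 + eps l l}

lemma dot_eps (l a b : ℕ) (ha : 1 ≤ a) (ha' : a ≤ l) :
    ∑ k : Fin l, eps l a k * eps l b k = if a = b then 1 else 0 := by
  rw [Finset.sum_eq_single (⟨a - 1, by omega⟩ : Fin l)]
  · simp only [eps]
    split_ifs <;> first | omega | norm_num
  · intro k _ hk
    have h : ¬((k : ℕ) + 1 = a) := fun h => hk (Fin.ext (show (k:ℕ) = a - 1 by omega))
    simp [eps, h]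
  · exact fun h => absurd (Finset.mem_univ _) h

lemma dot_weight (l a : ℕ) (ha : 1 ≤ a) (ha' : a ≤ l) :
    ∑ k : Fin l, eps l a k * ((k : ℝ) + 1) = a := by
  rw [Finset.sum_eq_single (⟨a - 1, by omega⟩ : Fin l)]
  · simp only [eps]
    rw [if_pos (show ((⟨a - 1, by omega⟩ : Fin l) : ℕ) + 1 = a from by show a - 1 + 1 = a; omega)]
    have : (((⟨a - 1, by omega⟩ : Fin l) : ℕ) : ℝ) = (a : ℝ) - 1 := by
      have : ((a - 1 : ℕ) : ℝ) = (a : ℝ) - 1 := by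
        rw [Nat.cast_sub ha]; norm_num
      simpa using this
    rw [this]; ring
  · intro k _ hk
    have h : ¬((k : ℕ) + 1 = a) := fun h => hk (Fin.ext (show (k:ℕ) = a - 1 by omega))
    simp [eps, h]
  · exact fun h => absurd (Finset.mem_univ _) h

lemma dot_comb {l : ℕ} (u w : Fin l → ℝ) (s t s' t' : ℝ) (a b c d : ℕ)
    (hu : ∀ k, u k = s * eps l a k + t * eps l b k)
    (hw : ∀ k, w k = s' * eps l c k + t' * eps l d k)
    (ha : 1 ≤ a) (ha' : a ≤ l) (hb : 1 ≤ b) (hb' : b ≤ l) :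
    ∑ k : Fin l, u k * w k =
      s * s' * (if a = c then 1 else 0) + s * t' * (if a = d then 1 else 0)
      + t * s' * (if b = c then 1 else 0) + t * t' * (if b = d then 1 else 0) := by
  calc ∑ k : Fin l, u k * w k
      = ∑ k : Fin l, (s * s' * (eps l a k * eps l c k) + s * t' * (eps l a k * eps l d k)
        + t * s' * (eps l b k * eps l c k) + t * t' * (eps l b k * eps l d k)) :=
        Finset.sum_congr rfl (fun k _ => by rw [hu k, hw k]; ring)
    _ = _ := by
        rw [Finset.sum_add_distrib, Finset.sum_add_distrib, Finset.sum_add_distrib,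
          ← Finset.mul_sum, ← Finset.mul_sum, ← Finset.mul_sum, ← Finset.mul_sum,
          dot_eps l a c ha ha', dot_eps l a d ha ha', dot_eps l b c hb hb',
          dot_eps l b d hb hb']

lemma norm_add {l : ℕ} (u w : Fin l → ℝ) :
    ∑ k : Fin l, (u + w) k * (u + w) k
      = (∑ k : Fin l, u k * u k) + (∑ k : Fin l, w k * w k) + 2 * ∑ k : Fin l, u k * w k := by
  simp only [Pi.add_apply]
  rw [Finset.mul_sum, ← Finset.sum_add_distrib, ← Finset.sum_add_distrib]
  exact Finset.sum_congr rfl (fun _ _ => by ring)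

lemma norm_two {l : ℕ} (u : Fin l → ℝ) (a b : ℕ) (s t : ℝ) (hs : s * s = 1) (ht : t * t = 1)
    (hu : ∀ k, u k = s * eps l a k + t * eps l b k) (hab : a ≠ b)
    (ha : 1 ≤ a) (ha' : a ≤ l) (hb : 1 ≤ b) (hb' : b ≤ l) :
    ∑ k : Fin l, u k * u k = 2 := by
  rw [dot_comb u u s t s t a b a b hu hu ha ha' hb hb', if_pos rfl, if_pos rfl,
    if_neg hab, if_neg (Ne.symm hab)]
  linear_combination hs + ht

lemma normPhi {l : ℕ} (v : Fin l → ℝ) (hv : v ∈ PhiD l) :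
    ∑ k : Fin l, v k * v k = 2 := by
  obtain ⟨i, j, hi, hij, hjl, hc⟩ := hv
  rcases hc with rfl | rfl | rfl | rfl
  · exact norm_two _ i j 1 1 (by norm_num) (by norm_num) (fun k => by simp)
      (by omega) hi (by omega) (by omega) hjl
  · exact norm_two _ i j 1 (-1) (by norm_num) (by norm_num) (fun k => by simp only [Pi.add_apply, Pi.sub_apply, Pi.neg_apply]; ring)
      (by omega) hi (by omega) (by omega) hjl
  · exact norm_two _ i j (-1) 1 (by norm_num) (by norm_num) (fun k => by simp only [Pi.add_apply, Pi.sub_apply, Pi.neg_apply]; ring)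
      (by omega) hi (by omega) (by omega) hjl
  · exact norm_two _ i j (-1) (-1) (by norm_num) (by norm_num) (fun k => by simp only [Pi.add_apply, Pi.sub_apply, Pi.neg_apply]; ring)
      (by omega) hi (by omega) (by omega) hjl

lemma alpha_ne_gm (l j : ℕ) (hl : 3 ≤ l) (h1 : 1 ≤ j) (h2 : j ≤ l - 1) :
    eps l j + eps l (j + 1) ≠ eps l 1 - eps l l := by
  intro h
  have H := congrFun h ⟨l - 1, by omega⟩
  simp only [Pi.add_apply, Pi.sub_apply, eps] at H
  split_ifs at H <;> first | omega | norm_num at H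

lemma alpha_ne_gp (l j : ℕ) (hl : 3 ≤ l) (h1 : 1 ≤ j) (h2 : j ≤ l - 1) :
    eps l j + eps l (j + 1) ≠ eps l 1 + eps l l := by
  intro h
  by_cases hc : j + 1 = l
  · have H := congrFun h ⟨0, by omega⟩
    simp only [Pi.add_apply, eps] at H
    split_ifs at H <;> first | omega | norm_num at H
  · have H := congrFun h ⟨l - 1, by omega⟩
    simp only [Pi.add_apply, eps] at H
    split_ifs at H <;> first | omega | norm_num at H

lemma gm_ne_gp (l : ℕ) (hl : 3 ≤ l) : eps l 1 - eps l l ≠ eps l 1 + eps l l := by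
  intro h
  have H := congrFun h ⟨l - 1, by omega⟩
  simp only [Pi.add_apply, Pi.sub_apply, eps] at H
  split_ifs at H <;> first | omega | norm_num at H

lemma sum_coeff_eps (l : ℕ) (t : Fin l) (c : ℕ → ℝ) (s : Finset ℕ) :
    ∑ j ∈ s, c j * eps l j t = if ((t : ℕ) + 1) ∈ s then c ((t : ℕ) + 1) else 0 := by
  rw [Finset.sum_congr rfl
    (fun j _ => show c j * eps l j t = if (t : ℕ) + 1 = j then c j else 0 from by
      simp [eps, mul_ite])]
  exact Finset.sum_ite_eq s ((t : ℕ) + 1) c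

lemma sum_coeff_eps' (l : ℕ) (t : Fin l) (c : ℕ → ℝ) (s : Finset ℕ) :
    ∑ j ∈ s, c j * eps l (j + 1) t = if ((t : ℕ)) ∈ s then c ((t : ℕ)) else 0 := by
  rw [Finset.sum_congr rfl
    (fun j _ => show c j * eps l (j + 1) t = if (t : ℕ) = j then c j else 0 from by
      simp [eps, mul_ite])]
  exact Finset.sum_ite_eq s ((t : ℕ)) c

lemma sigma_eq (l : ℕ) (hl : 3 ≤ l) :
    (∑ i ∈ Finset.Icc 1 l, ∑ j ∈ Finset.Icc (i + 1) l,
        ((eps l i - eps l j) + (eps l i + eps l j)))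
      = (∑ j ∈ Finset.Icc 1 (l - 1),
          ((l : ℝ) - ((j : ℝ) + ((j : ℝ) + 1)) / 2) • (eps l j + eps l (j + 1)))
        + ((l : ℝ) / 2) • (eps l 1 - eps l l)
        + (((l : ℝ) - 1) / 2) • (eps l 1 + eps l l) := by
  funext t
  have ht := t.isLt
  simp only [Finset.sum_apply, Pi.add_apply, Pi.sub_apply, Pi.smul_apply, smul_eq_mul]
  have hL : ∑ i ∈ Finset.Icc 1 l, ∑ j ∈ Finset.Icc (i + 1) l,
      (eps l i t - eps l j t + (eps l i t + eps l j t))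
      = 2 * ((l : ℝ) - (((t : ℕ) : ℝ) + 1)) := by
    have hstep : ∀ i ∈ Finset.Icc 1 l,
        (∑ j ∈ Finset.Icc (i + 1) l, (eps l i t - eps l j t + (eps l i t + eps l j t)))
          = ((l - i : ℕ) : ℝ) * (2 * eps l i t) := by
      intro i _
      rw [Finset.sum_congr rfl (fun j _ => (by ring :
          eps l i t - eps l j t + (eps l i t + eps l j t) = 2 * eps l i t)),
        Finset.sum_const, Nat.card_Icc, nsmul_eq_mul]
      congr 2
      omega
    rw [Finset.sum_congr rfl hstep,
      Finset.sum_congr rfl (fun i _ => show ((l - i : ℕ) : ℝ) * (2 * eps l i t)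
        = (fun i => ((l - i : ℕ) : ℝ) * 2) i * eps l i t from by ring),
      sum_coeff_eps l t (fun i => ((l - i : ℕ) : ℝ) * 2) (Finset.Icc 1 l),
      if_pos (Finset.mem_Icc.mpr ⟨by omega, by omega⟩)]
    rw [Nat.cast_sub (by omega : (t : ℕ) + 1 ≤ l)]
    push_cast
    ring
  rw [hL, Finset.sum_congr rfl (fun j _ => by rw [mul_add]),
    Finset.sum_add_distrib,
    sum_coeff_eps l t (fun j => (l : ℝ) - ((j : ℝ) + ((j : ℝ) + 1)) / 2),
    sum_coeff_eps' l t (fun j => (l : ℝ) - ((j : ℝ) + ((j : ℝ) + 1)) / 2)]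
  rcases (show (t : ℕ) + 1 = 1 ∨ (t : ℕ) + 1 = l ∨ (2 ≤ (t : ℕ) + 1 ∧ (t : ℕ) + 1 ≤ l - 1)
      from by omega) with hc | hc | hc
  · rw [if_pos (Finset.mem_Icc.mpr ⟨by omega, by omega⟩),
      if_neg (fun hmem => by have := (Finset.mem_Icc.mp hmem).1; omega)]
    have ht0 : ((t : ℕ) : ℝ) = 0 := by exact_mod_cast (by omega : (t : ℕ) = 0)
    rw [show eps l 1 t = 1 from by simp [eps, hc],
      show eps l l t = 0 from by simp [eps]; omega]
    push_cast
    rw [ht0]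
    ring
  · rw [if_neg (fun hmem => by have := (Finset.mem_Icc.mp hmem).2; omega),
      if_pos (Finset.mem_Icc.mpr ⟨by omega, by omega⟩)]
    have ht0 : ((t : ℕ) : ℝ) = (l : ℝ) - 1 := by
      rw [show (t : ℕ) = l - 1 from by omega, Nat.cast_sub (by omega)]; norm_num
    rw [show eps l 1 t = 0 from by simp [eps]; omega,
      show eps l l t = 1 from by simp [eps, hc]]
    rw [ht0]
    ring
  · rw [if_pos (Finset.mem_Icc.mpr ⟨by omega, by omega⟩),
      if_pos (Finset.mem_Icc.mpr ⟨by omega, by omega⟩)]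
    rw [show eps l 1 t = 0 from by simp [eps]; omega,
      show eps l l t = 0 from by simp [eps]; omega]
    push_cast
    ring

lemma alpha_inj (l : ℕ) (j k : ℕ) (hj1 : 1 ≤ j) (hj2 : j ≤ l - 1) (hk1 : 1 ≤ k)
    (hk2 : k ≤ l - 1) (hl : 3 ≤ l)
    (h : eps l j + eps l (j + 1) = eps l k + eps l (k + 1)) : j = k := by
  have H := congrArg (fun v : Fin l → ℝ => ∑ x : Fin l, v x * ((x : ℝ) + 1)) h
  simp only [Pi.add_apply, add_mul] at H
  rw [Finset.sum_add_distrib, Finset.sum_add_distrib,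
    dot_weight l j hj1 (by omega), dot_weight l (j + 1) (by omega) (by omega),
    dot_weight l k hk1 (by omega), dot_weight l (k + 1) (by omega) (by omega)] at H
  have : (j : ℝ) = k := by push_cast at H; linarith
  exact_mod_cast this

lemma mem_psi {l : ℕ} {β : Fin l → ℝ} :
    β ∈ PsiD l ↔ (∃ j, (1 ≤ j ∧ j ≤ l - 1) ∧ eps l j + eps l (j + 1) = β) ∨
      β = eps l 1 - eps l l ∨ β = eps l 1 + eps l l := by
  rw [PsiD]
  simp only [Finset.mem_union, Finset.mem_image, Finset.mem_Icc, Finset.mem_insert,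
    Finset.mem_singleton]

/-- Let `l ≥ 3` and `σ = ∑_{1≤i<j≤l} ((ε_i-ε_j)+(ε_i+ε_j))`. Then (i) every element of
`Ψ` lies in `Φ(D_l)` and `σ` is a positive combination of `Ψ`; (ii) `Ψ` spans `ℝ^l`;
(iii)′ the only pair of elements of `Ψ` whose sum is in `Φ(D_l)` is
`{ε_1 - ε_l, ε_{l-1} + ε_l}`. -/
theorem stmt_6 (l : ℕ) (hl : 3 ≤ l) :
    ((∀ β ∈ PsiD l, β ∈ PhiD l) ∧
      ∃ m : (Fin l → ℝ) → ℝ, (∀ β ∈ PsiD l, 0 < m β) ∧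
        (∑ i ∈ Finset.Icc 1 l, ∑ j ∈ Finset.Icc (i + 1) l,
            ((eps l i - eps l j) + (eps l i + eps l j)))
          = ∑ β ∈ PsiD l, m β • β) ∧
    Submodule.span ℝ (PsiD l : Set (Fin l → ℝ)) = ⊤ ∧
    (∀ β ∈ PsiD l, ∀ β' ∈ PsiD l, β + β' ∈ PhiD l →
      (β = eps l 1 - eps l l ∧ β' = eps l (l - 1) + eps l l) ∨
      (β = eps l (l - 1) + eps l l ∧ β' = eps l 1 - eps l l)) := by
  classical
  have hl3 : (3 : ℝ) ≤ (l : ℝ) := by exact_mod_cast hl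
  set M : (Fin l → ℝ) → ℝ := fun v =>
    if v = eps l 1 - eps l l then (l : ℝ) / 2
    else if v = eps l 1 + eps l l then ((l : ℝ) - 1) / 2
    else (l : ℝ) - (∑ k : Fin l, v k * ((k : ℝ) + 1)) / 2 with hM
  have hMα : ∀ j, 1 ≤ j → j ≤ l - 1 →
      M (eps l j + eps l (j + 1)) = (l : ℝ) - ((j : ℝ) + ((j : ℝ) + 1)) / 2 := by
    intro j h1 h2
    rw [hM]
    simp only []
    rw [if_neg (alpha_ne_gm l j hl h1 h2), if_neg (alpha_ne_gp l j hl h1 h2)]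
    congr 1
    simp only [Pi.add_apply, add_mul]
    rw [Finset.sum_add_distrib, dot_weight l j h1 (by omega),
      dot_weight l (j + 1) (by omega) (by omega)]
    push_cast
    ring
  have hMgm : M (eps l 1 - eps l l) = (l : ℝ) / 2 := by
    rw [hM]; simp
  have hMgp : M (eps l 1 + eps l l) = ((l : ℝ) - 1) / 2 := by
    rw [hM]
    simp only []
    rw [if_neg (Ne.symm (gm_ne_gp l hl))]
    simp
  refine ⟨⟨?_, M, ?_, ?_⟩, ?_, ?_⟩
  · -- Ψ ⊆ Φ
    intro β hβ
    rcases mem_psi.mp hβ with ⟨j, ⟨h1, h2⟩, rfl⟩ | rfl | rfl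
    · exact ⟨j, j + 1, h1, by omega, by omega, Or.inl rfl⟩
    · exact ⟨1, l, le_refl 1, by omega, le_refl l, Or.inr (Or.inl rfl)⟩
    · exact ⟨1, l, le_refl 1, by omega, le_refl l, Or.inl rfl⟩
  · -- positivity
    intro β hβ
    rcases mem_psi.mp hβ with ⟨j, ⟨h1, h2⟩, rfl⟩ | rfl | rfl
    · rw [hMα j h1 h2]
      have : (j : ℝ) + 1 ≤ (l : ℝ) := by exact_mod_cast (show j + 1 ≤ l by omega)
      linarith
    · rw [hMgm]; linarith
    · rw [hMgp]; linarith
  · -- the sum identity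
    have hconv : (∑ j ∈ Finset.Icc 1 (l - 1),
        M (eps l j + eps l (j + 1)) • (eps l j + eps l (j + 1)))
        = ∑ j ∈ Finset.Icc 1 (l - 1),
          ((l : ℝ) - ((j : ℝ) + ((j : ℝ) + 1)) / 2) • (eps l j + eps l (j + 1)) :=
      Finset.sum_congr rfl (fun j hj => by
        rw [hMα j (Finset.mem_Icc.mp hj).1 (Finset.mem_Icc.mp hj).2])
    rw [sigma_eq l hl, PsiD, Finset.sum_union, Finset.sum_image, Finset.sum_pair
      (gm_ne_gp l hl), hMgm, hMgp]
    · rw [hconv, add_assoc]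
    · intro x hx y hy hxy
      exact alpha_inj l x y (Finset.mem_Icc.mp hx).1 (Finset.mem_Icc.mp hx).2
        (Finset.mem_Icc.mp hy).1 (Finset.mem_Icc.mp hy).2 hl hxy
    · rw [Finset.disjoint_left]
      rintro a ha hb
      obtain ⟨j, hj, rfl⟩ := Finset.mem_image.mp ha
      rcases Finset.mem_insert.mp hb with h | h
      · exact alpha_ne_gm l j hl (Finset.mem_Icc.mp hj).1 (Finset.mem_Icc.mp hj).2 h
      · exact alpha_ne_gp l j hl (Finset.mem_Icc.mp hj).1 (Finset.mem_Icc.mp hj).2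
          (Finset.mem_singleton.mp h)
  · -- span
    have hgm : (eps l 1 - eps l l) ∈ (PsiD l : Set (Fin l → ℝ)) := by
      exact_mod_cast mem_psi.mpr (Or.inr (Or.inl rfl))
    have hgp : (eps l 1 + eps l l) ∈ (PsiD l : Set (Fin l → ℝ)) := by
      exact_mod_cast mem_psi.mpr (Or.inr (Or.inr rfl))
    have hα : ∀ j, 1 ≤ j → j ≤ l - 1 →
        (eps l j + eps l (j + 1)) ∈ (PsiD l : Set (Fin l → ℝ)) := by
      intro j h1 h2
      exact_mod_cast mem_psi.mpr (Or.inl ⟨j, ⟨h1, h2⟩, rfl⟩)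
    have h1mem : eps l 1 ∈ Submodule.span ℝ (PsiD l : Set (Fin l → ℝ)) := by
      have heq : eps l 1 = (1 / 2 : ℝ) • ((eps l 1 - eps l l) + (eps l 1 + eps l l)) := by
        module
      rw [heq]
      exact Submodule.smul_mem _ _ (Submodule.add_mem _ (Submodule.subset_span hgm)
        (Submodule.subset_span hgp))
    have hlmem : eps l l ∈ Submodule.span ℝ (PsiD l : Set (Fin l → ℝ)) := by
      have heq : eps l l = (1 / 2 : ℝ) • ((eps l 1 + eps l l) - (eps l 1 - eps l l)) := by
        module
      rw [heq]
      exact Submodule.smul_mem _ _ (Submodule.sub_mem _ (Submodule.subset_span hgp)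
        (Submodule.subset_span hgm))
    have main : ∀ k : ℕ, ∀ j : ℕ, 1 ≤ j → j ≤ l → l - j ≤ k →
        eps l j ∈ Submodule.span ℝ (PsiD l : Set (Fin l → ℝ)) := by
      intro k
      induction k with
      | zero =>
        intro j h1 h2 h3
        have : j = l := by omega
        subst this
        exact hlmem
      | succ k ih =>
        intro j h1 h2 h3
        by_cases hj : j = l
        · subst hj; exact hlmem
        · have hj' : j ≤ l - 1 := by omega
          have heq : eps l j = (eps l j + eps l (j + 1)) - eps l (j + 1) := by module
          rw [heq]
          exact Submodule.sub_mem _ (Submodule.subset_span (hα j h1 hj'))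
            (ih (j + 1) (by omega) (by omega) (by omega))
    rw [eq_top_iff, ← (Pi.basisFun ℝ (Fin l)).span_eq]
    apply Submodule.span_le.mpr
    rintro _ ⟨i, rfl⟩
    have hbi : Pi.basisFun ℝ (Fin l) i = eps l ((i : ℕ) + 1) := by
      funext j
      rw [Pi.basisFun_apply]
      by_cases h : j = i
      · subst h; simp [eps, Pi.single_apply]
      · have : ¬((j : ℕ) + 1 = (i : ℕ) + 1) := fun hh => h (Fin.ext (by omega))
        simp [eps, Pi.single_apply, h, this]
        exact fun hh => h (Fin.ext hh)
    rw [hbi]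
    exact main l ((i : ℕ) + 1) (by omega) (by omega) (by omega)
  · -- condition (iii)'
    intro β hβ β' hβ' hsum
    have h2 := normPhi (β + β') hsum
    rw [norm_add] at h2
    rcases mem_psi.mp hβ with ⟨j, ⟨hj1, hj2⟩, rfl⟩ | rfl | rfl <;>
      rcases mem_psi.mp hβ' with ⟨k, ⟨hk1, hk2⟩, rfl⟩ | rfl | rfl
    · -- α_j, α_k
      rw [norm_two _ j (j + 1) 1 1 (by norm_num) (by norm_num) (fun k' => by simp)
          (by omega) (by omega) (by omega) (by omega) (by omega),
        norm_two _ k (k + 1) 1 1 (by norm_num) (by norm_num) (fun k' => by simp)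
          (by omega) (by omega) (by omega) (by omega) (by omega),
        dot_comb _ _ 1 1 1 1 j (j + 1) k (k + 1) (fun k' => by simp) (fun k' => by simp)
          (by omega) (by omega) (by omega) (by omega)] at h2
      split_ifs at h2 <;> first | omega | norm_num at h2
    · -- α_j, γ⁻
      by_cases hgood : j + 1 = l
      · right
        refine ⟨?_, rfl⟩
        rw [show l - 1 = j from by omega, hgood]
      · rw [norm_two _ j (j + 1) 1 1 (by norm_num) (by norm_num) (fun k' => by simp)
            (by omega) (by omega) (by omega) (by omega) (by omega),
          norm_two _ 1 l 1 (-1) (by norm_num) (by norm_num)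
            (fun k' => by simp only [Pi.sub_apply]; ring)
            (by omega) (by omega) (by omega) (by omega) (by omega),
          dot_comb _ _ 1 1 1 (-1) j (j + 1) 1 l (fun k' => by simp)
            (fun k' => by simp only [Pi.sub_apply]; ring)
            (by omega) (by omega) (by omega) (by omega)] at h2
        split_ifs at h2 <;> first | omega | norm_num at h2
    · -- α_j, γ⁺
      rw [norm_two _ j (j + 1) 1 1 (by norm_num) (by norm_num) (fun k' => by simp)
          (by omega) (by omega) (by omega) (by omega) (by omega),
        norm_two _ 1 l 1 1 (by norm_num) (by norm_num) (fun k' => by simp)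
          (by omega) (by omega) (by omega) (by omega) (by omega),
        dot_comb _ _ 1 1 1 1 j (j + 1) 1 l (fun k' => by simp) (fun k' => by simp)
          (by omega) (by omega) (by omega) (by omega)] at h2
      split_ifs at h2 <;> first | omega | norm_num at h2
    · -- γ⁻, α_k
      by_cases hgood : k + 1 = l
      · left
        refine ⟨rfl, ?_⟩
        rw [show l - 1 = k from by omega, hgood]
      · rw [norm_two _ 1 l 1 (-1) (by norm_num) (by norm_num)
            (fun k' => by simp only [Pi.sub_apply]; ring)
            (by omega) (by omega) (by omega) (by omega) (by omega),
          norm_two _ k (k + 1) 1 1 (by norm_num) (by norm_num) (fun k' => by simp)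
            (by omega) (by omega) (by omega) (by omega) (by omega),
          dot_comb _ _ 1 (-1) 1 1 1 l k (k + 1)
            (fun k' => by simp only [Pi.sub_apply]; ring) (fun k' => by simp)
            (by omega) (by omega) (by omega) (by omega)] at h2
        split_ifs at h2 <;> first | omega | norm_num at h2
    · -- γ⁻, γ⁻
      rw [norm_two _ 1 l 1 (-1) (by norm_num) (by norm_num)
          (fun k' => by simp only [Pi.sub_apply]; ring)
          (by omega) (by omega) (by omega) (by omega) (by omega)] at h2
      norm_num at h2
    · -- γ⁻, γ⁺
      rw [norm_two _ 1 l 1 (-1) (by norm_num) (by norm_num)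
          (fun k' => by simp only [Pi.sub_apply]; ring)
          (by omega) (by omega) (by omega) (by omega) (by omega),
        norm_two _ 1 l 1 1 (by norm_num) (by norm_num) (fun k' => by simp)
          (by omega) (by omega) (by omega) (by omega) (by omega),
        dot_comb _ _ 1 (-1) 1 1 1 l 1 l
          (fun k' => by simp only [Pi.sub_apply]; ring) (fun k' => by simp)
          (by omega) (by omega) (by omega) (by omega)] at h2
      split_ifs at h2 <;> first | omega | norm_num at h2
    · -- γ⁺, α_k
      rw [norm_two _ 1 l 1 1 (by norm_num) (by norm_num) (fun k' => by simp)
          (by omega) (by omega) (by omega) (by omega) (by omega),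
        norm_two _ k (k + 1) 1 1 (by norm_num) (by norm_num) (fun k' => by simp)
          (by omega) (by omega) (by omega) (by omega) (by omega),
        dot_comb _ _ 1 1 1 1 1 l k (k + 1) (fun k' => by simp) (fun k' => by simp)
          (by omega) (by omega) (by omega) (by omega)] at h2
      split_ifs at h2 <;> first | omega | norm_num at h2
    · -- γ⁺, γ⁻
      rw [norm_two _ 1 l 1 1 (by norm_num) (by norm_num) (fun k' => by simp)
          (by omega) (by omega) (by omega) (by omega) (by omega),
        norm_two _ 1 l 1 (-1) (by norm_num) (by norm_num)
          (fun k' => by simp only [Pi.sub_apply]; ring)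
          (by omega) (by omega) (by omega) (by omega) (by omega),
        dot_comb _ _ 1 1 1 (-1) 1 l 1 l (fun k' => by simp)
          (fun k' => by simp only [Pi.sub_apply]; ring)
          (by omega) (by omega) (by omega) (by omega)] at h2
      split_ifs at h2 <;> first | omega | norm_num at h2
    · -- γ⁺, γ⁺
      rw [norm_two _ 1 l 1 1 (by norm_num) (by norm_num) (fun k' => by simp)
          (by omega) (by omega) (by omega) (by omega) (by omega)] at h2
      norm_num at h2
end

section
/- Work in ℝ^8 and set Ψ = {ε_2 + ε_3, ε_3 + ε_4, ε_4 + ε_5, ε_5 + ε_6, ε_6 + ε_7, ε_7 + ε_8, ε_8 − ε_1, ε_8 + ε_1}. Then: (i) every element of Ψ lies in Φ(E_8) and 2ε_2 + 4ε_3 + 6ε_4 + 8ε_5 + 10ε_6 + 12ε_7 + 46ε_8 = 2(ε_2 + ε_3) + 2(ε_3 + ε_4) + 4(ε_4 + ε_5) + 4(ε_5 + ε_6) + 6(ε_6 + ε_7) + 6(ε_7 + ε_8) + 20(ε_8 − ε_1) + 20(ε_8 + ε_1); (ii) Ψ spans ℝ^8; (iii) for all β, β′ ∈ Ψ (including β =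 β′), β + β′ ∉ Φ(E_8). -/
/-- The root system `Φ(E_8)` in Bourbaki's realization in `ℝ^8`: the vectors
`±ε_i ± ε_j` for `1 ≤ i < j ≤ 8`, together with the vectors
`(∑_{i=1}^8 (-1)^{ν(i)} ε_i)/2` with `∑ ν(i)` even. -/
def PhiE8 : Set (Fin 8 → ℝ) :=
  {v | ∃ i j, 1 ≤ i ∧ i < j ∧ j ≤ 8 ∧
      (v = eps 8 i + eps 8 j ∨ v = eps 8 i - eps 8 j ∨
       v = -eps 8 i + eps 8 j ∨ v = -eps 8 i - eps 8 j)} ∪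
  {v | ∃ ν : Fin 8 → Bool,
      Even (Finset.univ.filter fun i => ν i = true).card ∧
      v = ((1 : ℝ) / 2) • ∑ i : Fin 8, (if ν i then (-1 : ℝ) else 1) • eps 8 ((i : ℕ) + 1)}

/-- `Ψ = {ε_2+ε_3, ε_3+ε_4, ε_4+ε_5, ε_5+ε_6, ε_6+ε_7, ε_7+ε_8, ε_8-ε_1, ε_8+ε_1}`. -/
def PsiE8 : Set (Fin 8 → ℝ) :=
  {eps 8 2 + eps 8 3, eps 8 3 + eps 8 4, eps 8 4 + eps 8 5, eps 8 5 + eps 8 6,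
    eps 8 6 + eps 8 7, eps 8 7 + eps 8 8, eps 8 8 - eps 8 1, eps 8 8 + eps 8 1}

lemma eps_sum (i : ℕ) (h1 : 1 ≤ i) (h8 : i ≤ 8) : ∑ k : Fin 8, eps 8 i k = 1 := by
  interval_cases i <;> simp [eps, Fin.sum_univ_eight] <;> decide

lemma eps_mul_self (i : ℕ) (k : Fin 8) : eps 8 i k * eps 8 i k = eps 8 i k := by
  simp only [eps]; split_ifs <;> norm_num

lemma eps_mul_ne (i j : ℕ) (hij : i ≠ j) (k : Fin 8) : eps 8 i k * eps 8 j k = 0 := by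
  simp only [eps]; split_ifs <;> (try omega) <;> norm_num

lemma eps_single (i : Fin 8) : eps 8 ((i : ℕ) + 1) = Pi.single i 1 := by
  funext j
  simp [eps, Pi.single_apply, Fin.val_inj, eq_comm]

lemma sum_coeff (c : Fin 8 → ℝ) (j : Fin 8) :
    (∑ i : Fin 8, c i • eps 8 ((i : ℕ) + 1)) j = c j := by
  have : ∀ i : Fin 8, (c i • eps 8 ((i : ℕ) + 1)) j = if j = i then c i else 0 := by
    intro i
    simp only [Pi.smul_apply, eps, smul_eq_mul]
    by_cases h : j = i <;> simp [h, Fin.val_inj]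
  rw [Finset.sum_apply]
  simp only [this]
  simp

lemma phi_norm {v : Fin 8 → ℝ} (hv : v ∈ PhiE8) : ∑ k : Fin 8, v k * v k = 2 := by
  rcases hv with ⟨i, j, h1, hij, h8, hc⟩ | ⟨ν, _, rfl⟩
  · have hne : i ≠ j := Nat.ne_of_lt hij
    have hi1 : 1 ≤ i := h1
    have hi8 : i ≤ 8 := le_of_lt (lt_of_lt_of_le hij h8)
    have hj1 : 1 ≤ j := le_of_lt (lt_of_le_of_lt h1 hij)
    have key : ∀ k : Fin 8, v k * v k = eps 8 i k + eps 8 j k := by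
      intro k
      rcases hc with rfl | rfl | rfl | rfl <;>
        · show (_ : ℝ) * _ = _
          simp only [Pi.add_apply, Pi.sub_apply, Pi.neg_apply]
          have := eps_mul_self i k
          have := eps_mul_self j k
          have := eps_mul_ne i j hne k
          nlinarith [this]
    rw [Finset.sum_congr rfl fun k _ => key k, Finset.sum_add_distrib,
      eps_sum i hi1 hi8, eps_sum j hj1 h8]
    norm_num
  · have key : ∀ k : Fin 8,
        (((1 : ℝ) / 2) • ∑ i : Fin 8, (if ν i then (-1 : ℝ) else 1) • eps 8 ((i : ℕ) + 1)) k
          * (((1 : ℝ) / 2) • ∑ i : Fin 8, (if ν i then (-1 : ℝ) else 1) • eps 8 ((i : ℕ) + 1)) k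
          = 1 / 4 := by
      intro k
      have := sum_coeff (fun i => if ν i then (-1 : ℝ) else 1) k
      simp only [Pi.smul_apply, this, smul_eq_mul]
      split_ifs <;> norm_num
    rw [Finset.sum_congr rfl fun k _ => key k]
    norm_num

lemma span_psi : Submodule.span ℝ PsiE8 = ⊤ := by
  set S := Submodule.span ℝ PsiE8 with hS
  have h0 : ∀ x ∈ PsiE8, x ∈ S := fun x hx => Submodule.subset_span hx
  have ha : eps 8 2 + eps 8 3 ∈ S := h0 _ (by simp [PsiE8])
  have hb : eps 8 3 + eps 8 4 ∈ S := h0 _ (by simp [PsiE8])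
  have hc : eps 8 4 + eps 8 5 ∈ S := h0 _ (by simp [PsiE8])
  have hd : eps 8 5 + eps 8 6 ∈ S := h0 _ (by simp [PsiE8])
  have he : eps 8 6 + eps 8 7 ∈ S := h0 _ (by simp [PsiE8])
  have hf : eps 8 7 + eps 8 8 ∈ S := h0 _ (by simp [PsiE8])
  have hg : eps 8 8 - eps 8 1 ∈ S := h0 _ (by simp [PsiE8])
  have hh : eps 8 8 + eps 8 1 ∈ S := h0 _ (by simp [PsiE8])
  have e1 : eps 8 1 ∈ S := by
    have : eps 8 1 = (2⁻¹ : ℝ) • ((eps 8 8 + eps 8 1) - (eps 8 8 - eps 8 1)) := by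
      funext j; simp [eps]; split_ifs <;> ring
    rw [this]; exact S.smul_mem _ (S.sub_mem hh hg)
  have e8 : eps 8 8 ∈ S := by
    have : eps 8 8 = (2⁻¹ : ℝ) • ((eps 8 8 + eps 8 1) + (eps 8 8 - eps 8 1)) := by
      funext j; simp [eps]; split_ifs <;> ring
    rw [this]; exact S.smul_mem _ (S.add_mem hh hg)
  have e7 : eps 8 7 ∈ S := by
    have : eps 8 7 = (eps 8 7 + eps 8 8) - eps 8 8 := by abel
    rw [this]; exact S.sub_mem hf e8
  have e6 : eps 8 6 ∈ S := by
    have : eps 8 6 = (eps 8 6 + eps 8 7) - eps 8 7 := by abel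
    rw [this]; exact S.sub_mem he e7
  have e5 : eps 8 5 ∈ S := by
    have : eps 8 5 = (eps 8 5 + eps 8 6) - eps 8 6 := by abel
    rw [this]; exact S.sub_mem hd e6
  have e4 : eps 8 4 ∈ S := by
    have : eps 8 4 = (eps 8 4 + eps 8 5) - eps 8 5 := by abel
    rw [this]; exact S.sub_mem hc e5
  have e3 : eps 8 3 ∈ S := by
    have : eps 8 3 = (eps 8 3 + eps 8 4) - eps 8 4 := by abel
    rw [this]; exact S.sub_mem hb e4
  have e2 : eps 8 2 ∈ S := by
    have : eps 8 2 = (eps 8 2 + eps 8 3) - eps 8 3 := by abel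
    rw [this]; exact S.sub_mem ha e3
  have hall : ∀ i : Fin 8, eps 8 ((i : ℕ) + 1) ∈ S := by
    intro i; fin_cases i <;> simpa using ‹_›
  rw [eq_top_iff]
  intro x _
  have hx : x = ∑ i : Fin 8, x i • eps 8 ((i : ℕ) + 1) := by
    funext j
    rw [Finset.sum_apply]
    simp [eps_single, Pi.single_apply]
  rw [hx]
  exact Submodule.sum_mem _ fun i _ => S.smul_mem _ (hall i)

theorem stmt_9 :
    (PsiE8 ⊆ PhiE8 ∧
      (2 : ℝ) • eps 8 2 + (4 : ℝ) • eps 8 3 + (6 : ℝ) • eps 8 4 + (8 : ℝ) • eps 8 5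
          + (10 : ℝ) • eps 8 6 + (12 : ℝ) • eps 8 7 + (46 : ℝ) • eps 8 8
        = (2 : ℝ) • (eps 8 2 + eps 8 3) + (2 : ℝ) • (eps 8 3 + eps 8 4)
          + (4 : ℝ) • (eps 8 4 + eps 8 5) + (4 : ℝ) • (eps 8 5 + eps 8 6)
          + (6 : ℝ) • (eps 8 6 + eps 8 7) + (6 : ℝ) • (eps 8 7 + eps 8 8)
          + (20 : ℝ) • (eps 8 8 - eps 8 1) + (20 : ℝ) • (eps 8 8 + eps 8 1)) ∧
    Submodule.span ℝ PsiE8 = ⊤ ∧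
    (∀ β ∈ PsiE8, ∀ β' ∈ PsiE8, β + β' ∉ PhiE8) := by
  refine ⟨⟨?_, ?_⟩, span_psi, ?_⟩
  · intro v hv
    rcases hv with rfl|rfl|rfl|rfl|rfl|rfl|rfl|rfl
    · exact Or.inl ⟨2, 3, by norm_num, by norm_num, by norm_num, Or.inl rfl⟩
    · exact Or.inl ⟨3, 4, by norm_num, by norm_num, by norm_num, Or.inl rfl⟩
    · exact Or.inl ⟨4, 5, by norm_num, by norm_num, by norm_num, Or.inl rfl⟩
    · exact Or.inl ⟨5, 6, by norm_num, by norm_num, by norm_num, Or.inl rfl⟩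
    · exact Or.inl ⟨6, 7, by norm_num, by norm_num, by norm_num, Or.inl rfl⟩
    · exact Or.inl ⟨7, 8, by norm_num, by norm_num, by norm_num, Or.inl rfl⟩
    · exact Or.inl ⟨1, 8, by norm_num, by norm_num, by norm_num,
        Or.inr (Or.inr (Or.inl (sub_eq_neg_add _ _)))⟩
    · exact Or.inl ⟨1, 8, by norm_num, by norm_num, by norm_num, Or.inl (add_comm _ _)⟩
  · funext j
    simp only [Pi.add_apply, Pi.sub_apply, Pi.smul_apply, smul_eq_mul]
    ring
  · intro β hβ β' hβ' hmem
    have h2 := phi_norm hmem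
    rcases hβ with rfl|rfl|rfl|rfl|rfl|rfl|rfl|rfl <;>
      rcases hβ' with rfl|rfl|rfl|rfl|rfl|rfl|rfl|rfl <;>
      revert h2 <;>
      norm_num [eps, Fin.sum_univ_eight, show ((3:Fin 8):ℕ)=3 from rfl,
        show ((4:Fin 8):ℕ)=4 from rfl, show ((5:Fin 8):ℕ)=5 from rfl,
        show ((6:Fin 8):ℕ)=6 from rfl, show ((7:Fin 8):ℕ)=7 from rfl,
        show ¬((2:Fin 8) = 0) from by decide, show ¬((3:Fin 8) = 0) from by decide,
        show ¬((4:Fin 8) = 0) from by decide, show ¬((5:Fin 8) = 0) from by decide,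
        show ¬((6:Fin 8) = 0) from by decide, show ¬((7:Fin 8) = 0) from by decide]
end

section
/- Let k ≥ 1 be an integer and l = 2k. Work in ℝ^{l+1} and set 2ρ = ∑_{i=1}^{l+1} (l + 2 − 2i)·ε_i (the sum of the positive roots ε_i − ε_j, i < j, of A_l). Then: (1) 2ρ = 2·∑_{(i,j) : 1≤i<j≤l+1, k<j−i<l} (ε_i − ε_j) + 2(ε_1 − ε_{k+1}) + 2(ε_{k+1} − ε_{l+1}); (2) the set Ψ = {ε_i − ε_j : 1 ≤ i < j ≤ l+1 and k < j − i < l} ∪ {ε_1 − ε_{k+1}, ε_{k+1} − ε_{l+1}} spans the hyperplane V = {x ∈ ℝ^{l+1} : ∑_{i=1}^{l+1} x_i = 0}; (3)′ for all β, β′ ∈ Ψ (including β = β′), if β + β′ ∈ Φ(A_l) then {β, β′} = {ε_1 − ε_{k+1}, ε_{k+1} − ε_{l+1}}. -/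
/-- The root system `Φ(A_l)` in `ℝ^{l+1}` (here `n = l+1`): the vectors
`ε_a - ε_b` for `a ≠ b`. -/
def PhiA (n : ℕ) : Set (Fin n → ℝ) :=
  {v | ∃ a b, 1 ≤ a ∧ a ≤ n ∧ 1 ≤ b ∧ b ≤ n ∧ a ≠ b ∧ v = eps n a - eps n b}

/-- `Ψ = {ε_i - ε_j : 1 ≤ i < j ≤ l+1, k < j - i < l} ∪ {ε_1 - ε_{k+1}, ε_{k+1} - ε_{l+1}}`. -/
def PsiA_even (l k : ℕ) : Set (Fin (l + 1) → ℝ) :=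
  {v | ∃ i j, 1 ≤ i ∧ i < j ∧ j ≤ l + 1 ∧ k < j - i ∧ j - i < l ∧
      v = eps (l + 1) i - eps (l + 1) j} ∪
  {eps (l + 1) 1 - eps (l + 1) (k + 1), eps (l + 1) (k + 1) - eps (l + 1) (l + 1)}

lemma eps_apply (n i p : ℕ) (h1 : 1 ≤ p) (hp : p - 1 < n) :
    eps n i ⟨p - 1, hp⟩ = if p = i then 1 else 0 := by
  show (if (p-1) + 1 = i then (1:ℝ) else 0) = if p = i then 1 else 0
  split_ifs with h h' h' <;> first | rfl | omega


lemma sum_eps (n i : ℕ) (h1 : 1 ≤ i) (h2 : i ≤ n) :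
    ∑ c : Fin n, eps n i c = 1 := by
  rw [Finset.sum_eq_single (⟨i - 1, by omega⟩ : Fin n)]
  · simpa using eps_apply n i i h1 (by omega)
  · intro c _ hc
    have hcv : (c : ℕ) ≠ i - 1 := fun h => hc (Fin.ext h)
    unfold eps
    rw [if_neg (by omega)]
  · simp


lemma lemA (n i j i' j' a b : ℕ) (hij : i < j) (hi : 1 ≤ i) (hj : j ≤ n)
    (hij' : i' < j') (hi' : 1 ≤ i') (hj' : j' ≤ n)
    (ha : 1 ≤ a) (han : a ≤ n) (hb : 1 ≤ b) (hbn : b ≤ n)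
    (h : eps n i - eps n j + (eps n i' - eps n j') = eps n a - eps n b) :
    j = i' ∨ i = j' := by
  by_contra hcon
  push_neg at hcon
  obtain ⟨h1, h2⟩ := hcon
  have key : ∀ p : ℕ, 1 ≤ p → p ≤ n →
      ((if p = i then (1:ℝ) else 0) - (if p = j then 1 else 0)
        + ((if p = i' then 1 else 0) - (if p = j' then 1 else 0))
      = (if p = a then 1 else 0) - (if p = b then 1 else 0)) := by
    intro p hp1 hp2
    have := congrFun h ⟨p - 1, by omega⟩
    simpa [eps_apply n _ p hp1 (by omega)] using this
  by_cases hii : i = i'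
  · have ki := key i hi (by omega)
    split_ifs at ki <;> first | omega | norm_num at ki
  · have ki := key i hi (by omega)
    have ki' := key i' hi' (by omega)
    have hia : i = a := by
      split_ifs at ki <;> first | omega | norm_num at ki
    have hia' : i' = a := by
      split_ifs at ki' <;> first | omega | norm_num at ki'
    omega

lemma lemB (l k : ℕ) (hk : 1 ≤ k) (hl : l = 2 * k) {β : Fin (l+1) → ℝ}
    (hβ : β ∈ PsiA_even l k) :
    ∃ i j, 1 ≤ i ∧ i < j ∧ j ≤ l + 1 ∧ k ≤ j - i ∧
      β = eps (l + 1) i - eps (l + 1) j ∧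
      (j - i = k → (i = 1 ∧ j = k + 1) ∨ (i = k + 1 ∧ j = l + 1)) := by
  rcases hβ with ⟨i, j, h1, h2, h3, h4, h5, h6⟩ | hβ | hβ
  · exact ⟨i, j, h1, h2, h3, by omega, h6, by omega⟩
  · exact ⟨1, k+1, by omega, by omega, by omega, by omega, hβ, by omega⟩
  · exact ⟨k+1, l+1, by omega, by omega, by omega, by omega, hβ, by omega⟩

lemma part3 (k l : ℕ) (hk : 1 ≤ k) (hl : l = 2 * k) :
    (∀ β ∈ PsiA_even l k, ∀ β' ∈ PsiA_even l k, β + β' ∈ PhiA (l + 1) →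
      (β = eps (l + 1) 1 - eps (l + 1) (k + 1) ∧
        β' = eps (l + 1) (k + 1) - eps (l + 1) (l + 1)) ∨
      (β = eps (l + 1) (k + 1) - eps (l + 1) (l + 1) ∧
        β' = eps (l + 1) 1 - eps (l + 1) (k + 1))) := by
  intro β hβ β' hβ' hsum
  obtain ⟨i, j, hi1, hij, hjn, hgap, hβe, hsp⟩ := lemB l k hk hl hβ
  obtain ⟨i', j', hi1', hij', hjn', hgap', hβe', hsp'⟩ := lemB l k hk hl hβ'
  obtain ⟨a, b, ha1, han, hb1, hbn, hab, he⟩ := hsum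
  rw [hβe, hβe'] at he
  have hA := lemA (l+1) i j i' j' a b hij hi1 hjn hij' hi1' hjn' ha1 han hb1 hbn he
  rcases hA with hA | hA
  · have h1 : j - i = k ∧ j' - i' = k := by omega
    have := hsp h1.1
    have := hsp' h1.2
    have hij2 : i = 1 ∧ j = k + 1 ∧ i' = k + 1 ∧ j' = l + 1 := by omega
    left
    constructor
    · rw [hβe, hij2.1, hij2.2.1]
    · rw [hβe', hij2.2.2.1, hij2.2.2.2]
  · have h1 : j - i = k ∧ j' - i' = k := by omega
    have := hsp h1.1
    have := hsp' h1.2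
    have hij2 : i' = 1 ∧ j' = k + 1 ∧ i = k + 1 ∧ j = l + 1 := by omega
    right
    constructor
    · rw [hβe, hij2.2.2.1, hij2.2.2.2]
    · rw [hβe', hij2.1, hij2.2.1]

lemma mem_psi_first (l k i j : ℕ) (h1 : 1 ≤ i) (h2 : i < j) (h3 : j ≤ l + 1)
    (h4 : k < j - i) (h5 : j - i < l) :
    eps (l+1) i - eps (l+1) j ∈ PsiA_even l k :=
  Or.inl ⟨i, j, h1, h2, h3, h4, h5, rfl⟩

lemma mem_psi_s1 (l k : ℕ) : eps (l+1) 1 - eps (l+1) (k+1) ∈ PsiA_even l k :=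
  Or.inr (Or.inl rfl)

lemma mem_psi_s2 (l k : ℕ) : eps (l+1) (k+1) - eps (l+1) (l+1) ∈ PsiA_even l k :=
  Or.inr (Or.inr rfl)

lemma spanE (k l : ℕ) (hk : 1 ≤ k) (hl : l = 2 * k) (p : ℕ) (hp2 : 2 ≤ p)
    (hpn : p ≤ l + 1) :
    eps (l+1) 1 - eps (l+1) p ∈ Submodule.span ℝ (PsiA_even l k) := by
  have fact1 : ∀ q, k + 1 ≤ q → q ≤ l + 1 →
      eps (l+1) 1 - eps (l+1) q ∈ Submodule.span ℝ (PsiA_even l k) := by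
    intro q hq1 hq2
    rcases eq_or_lt_of_le hq1 with h | h
    · exact Submodule.subset_span (h ▸ mem_psi_s1 l k)
    rcases eq_or_lt_of_le hq2 with h2 | h2
    · have : eps (l+1) 1 - eps (l+1) q
          = (eps (l+1) 1 - eps (l+1) (k+1)) + (eps (l+1) (k+1) - eps (l+1) (l+1)) := by
        rw [h2]; ring
      rw [this]
      exact Submodule.add_mem _ (Submodule.subset_span (mem_psi_s1 l k))
        (Submodule.subset_span (mem_psi_s2 l k))
    · exact Submodule.subset_span
        (mem_psi_first l k 1 q (by omega) (by omega) (by omega) (by omega) (by omega))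
  rcases le_or_gt (k+1) p with h | h
  · exact fact1 p h hpn
  · -- 2 ≤ p ≤ k, so k ≥ 2
    have : eps (l+1) 1 - eps (l+1) p
        = (eps (l+1) 1 - eps (l+1) (p+k+1)) - (eps (l+1) p - eps (l+1) (p+k+1)) := by
      ring
    rw [this]
    refine Submodule.sub_mem _ (fact1 (p+k+1) (by omega) (by omega)) ?_
    exact Submodule.subset_span
      (mem_psi_first l k p (p+k+1) (by omega) (by omega) (by omega) (by omega) (by omega))

lemma part2 (k l : ℕ) (hk : 1 ≤ k) (hl : l = 2 * k) :
    (Submodule.span ℝ (PsiA_even l k) : Set (Fin (l + 1) → ℝ))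
      = {x : Fin (l + 1) → ℝ | ∑ i, x i = 0} := by
  apply Set.Subset.antisymm
  · -- span ⊆ hyperplane
    have hker : ∀ v ∈ PsiA_even l k, ∑ i, v i = 0 := by
      intro v hv
      obtain ⟨i, j, hi1, hij, hjn, _, hve, _⟩ := lemB l k hk hl hv
      rw [hve]
      have h1 := sum_eps (l+1) i hi1 (by omega)
      have h2 := sum_eps (l+1) j (by omega) hjn
      simp only [Pi.sub_apply, Finset.sum_sub_distrib, h1, h2, sub_self]
    intro x hx
    rw [SetLike.mem_coe] at hx
    simp only [Set.mem_setOf_eq]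
    induction hx using Submodule.span_induction with
    | mem v hv => exact hker v hv
    | zero => simp
    | add v w _ _ hv hw => simp [Finset.sum_add_distrib, hv, hw]
    | smul c v _ hv =>
        simp only [Pi.smul_apply, smul_eq_mul, ← Finset.mul_sum, hv, mul_zero]
  · intro x hx
    have hx0 : ∑ i, x i = 0 := hx
    have hrep : x = ∑ c : Fin (l+1), (-x c) • (eps (l+1) 1 - eps (l+1) ((c : ℕ) + 1)) := by
      funext a
      rw [Finset.sum_apply]
      have term : ∀ c : Fin (l+1),
          ((-x c) • (eps (l+1) 1 - eps (l+1) ((c : ℕ) + 1))) a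
          = (-x c) * (if (a : ℕ) = 0 then 1 else 0) + (if a = c then x c else 0) := by
        intro c
        simp only [Pi.smul_apply, Pi.sub_apply, smul_eq_mul, eps]
        have e1 : (if (a:ℕ) + 1 = 1 then (1:ℝ) else 0) = (if (a:ℕ) = 0 then 1 else 0) := by
          split_ifs with h1 h2 h2 <;> first | rfl | omega
        have e2 : (if (a:ℕ) + 1 = (c:ℕ) + 1 then (1:ℝ) else 0) = (if a = c then 1 else 0) := by
          split_ifs with h1 h2 h2 <;> first | rfl | (exfalso; rw [Fin.ext_iff] at h2; omega)
        rw [e1, e2]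
        split_ifs <;> ring
      rw [Finset.sum_congr rfl (fun c _ => term c), Finset.sum_add_distrib]
      rw [← Finset.sum_mul, Finset.sum_ite_eq Finset.univ a (fun c => x c)]
      simp only [Finset.mem_univ, if_true]
      have hz : ∑ c : Fin (l+1), -x c = 0 := by
        rw [Finset.sum_neg_distrib, hx0, neg_zero]
      rw [hz, zero_mul, zero_add]
    rw [hrep]
    apply Submodule.sum_mem
    intro c _
    apply Submodule.smul_mem
    rcases Nat.eq_zero_or_pos (c : ℕ) with h | h
    · have : eps (l+1) 1 - eps (l+1) ((c:ℕ)+1) = 0 := by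
        rw [h]; simp
      rw [this]; exact Submodule.zero_mem _
    · exact spanE k l hk hl ((c:ℕ)+1) (by omega) (by omega)

lemma scalar (k l p : ℕ) (hk : 1 ≤ k) (hl : l = 2*k) (hp1 : 1 ≤ p) (hp2 : p ≤ l+1) :
    ∑ i ∈ Finset.Icc 1 (l+1), ((l:ℝ)+2-2*i) * (if p = i then 1 else 0)
    = 2 * (∑ i ∈ Finset.Icc 1 (l+1), ∑ j ∈ Finset.Icc (i+1) (l+1),
        if k < j-i ∧ j-i < l then ((if p = i then (1:ℝ) else 0) - (if p = j then 1 else 0)) else 0)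
      + 2 * ((if p = 1 then (1:ℝ) else 0) - (if p = k+1 then 1 else 0))
      + 2 * ((if p = k+1 then (1:ℝ) else 0) - (if p = l+1 then 1 else 0)) := by
  -- LHS
  have hL : ∑ i ∈ Finset.Icc 1 (l+1), ((l:ℝ)+2-2*i) * (if p = i then 1 else 0)
      = (l:ℝ)+2-2*p := by
    rw [Finset.sum_congr rfl (fun i _ => by
      show ((l:ℝ)+2-2*i) * (if p = i then 1 else 0) = if p = i then ((l:ℝ)+2-2*(i:ℝ)) else 0
      split_ifs <;> ring)]
    rw [Finset.sum_ite_eq, if_pos (by simp only [Finset.mem_Icc]; omega)]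
  -- double sum split
  have hsplit : ∀ i j : ℕ,
      (if k < j-i ∧ j-i < l then ((if p = i then (1:ℝ) else 0) - (if p = j then 1 else 0)) else 0)
      = (if p = i then (if k < j-i ∧ j-i < l then (1:ℝ) else 0) else 0)
        - (if p = j then (if k < j-i ∧ j-i < l then (1:ℝ) else 0) else 0) := by
    intro i j
    split_ifs <;> norm_num
  have hD : (∑ i ∈ Finset.Icc 1 (l+1), ∑ j ∈ Finset.Icc (i+1) (l+1),
        if k < j-i ∧ j-i < l then ((if p = i then (1:ℝ) else 0) - (if p = j then 1 else 0)) else 0)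
      = (∑ i ∈ Finset.Icc 1 (l+1), ∑ j ∈ Finset.Icc (i+1) (l+1),
          (if p = i then (if k < j-i ∧ j-i < l then (1:ℝ) else 0) else 0))
        - (∑ i ∈ Finset.Icc 1 (l+1), ∑ j ∈ Finset.Icc (i+1) (l+1),
          (if p = j then (if k < j-i ∧ j-i < l then (1:ℝ) else 0) else 0)) := by
    rw [← Finset.sum_sub_distrib]
    refine Finset.sum_congr rfl (fun i _ => ?_)
    rw [← Finset.sum_sub_distrib]
    exact Finset.sum_congr rfl (fun j _ => hsplit i j)
  -- A
  have hA : (∑ i ∈ Finset.Icc 1 (l+1), ∑ j ∈ Finset.Icc (i+1) (l+1),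
        (if p = i then (if k < j-i ∧ j-i < l then (1:ℝ) else 0) else 0))
      = ((Finset.Icc (p+k+1) (min (l+1) (p+l-1))).card : ℝ) := by
    rw [Finset.sum_congr rfl (fun i _ => by
      show (∑ j ∈ Finset.Icc (i+1) (l+1), if p = i then (if k < j-i ∧ j-i < l then (1:ℝ) else 0) else 0)
        = if p = i then (∑ j ∈ Finset.Icc (i+1) (l+1), if k < j-i ∧ j-i < l then (1:ℝ) else 0) else 0
      split_ifs <;> simp)]
    rw [Finset.sum_ite_eq, if_pos (by simp only [Finset.mem_Icc]; omega)]
    rw [Finset.sum_boole]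
    congr 1
    congr 1
    ext j
    simp only [Finset.mem_filter, Finset.mem_Icc]
    omega
  -- B
  have hB : (∑ i ∈ Finset.Icc 1 (l+1), ∑ j ∈ Finset.Icc (i+1) (l+1),
        (if p = j then (if k < j-i ∧ j-i < l then (1:ℝ) else 0) else 0))
      = ((Finset.Icc (max 1 (p+1-l)) (p-k-1)).card : ℝ) := by
    rw [Finset.sum_congr rfl (fun i _ => by
      rw [Finset.sum_ite_eq (Finset.Icc (i+1) (l+1)) p
        (fun j => if k < j-i ∧ j-i < l then (1:ℝ) else 0)])]
    rw [Finset.sum_congr rfl (fun i _ => by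
      show (if p ∈ Finset.Icc (i+1) (l+1) then (if k < p-i ∧ p-i < l then (1:ℝ) else 0) else 0)
        = if i+1 ≤ p ∧ k < p-i ∧ p-i < l then (1:ℝ) else 0
      simp only [Finset.mem_Icc]
      split_ifs <;> first | rfl | (exfalso; omega))]
    rw [Finset.sum_boole]
    congr 1
    congr 1
    ext i
    simp only [Finset.mem_filter, Finset.mem_Icc]
    omega
  rw [hL, hD, hA, hB, Nat.card_Icc, Nat.card_Icc]
  have hcase : p = 1 ∨ (2 ≤ p ∧ p ≤ k) ∨ p = k+1 ∨ (k+2 ≤ p ∧ p ≤ 2*k) ∨ p = 2*k+1 := by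
    omega
  have hlr : (l:ℝ) = 2*(k:ℝ) := by rw [hl]; push_cast; ring
  rcases hcase with h | h | h | h | h
  · have e1 : min (l+1) (p+l-1) + 1 - (p+k+1) = k - 1 := by omega
    have e2 : p-k-1 + 1 - max 1 (p+1-l) = 0 := by omega
    rw [e1, e2, if_pos (show p = 1 by omega), if_neg (show ¬ p = k+1 by omega),
      if_neg (show ¬ p = l+1 by omega)]
    push_cast [Nat.cast_sub hk]
    rw [hlr, show (p:ℝ) = 1 by exact_mod_cast congrArg (Nat.cast : ℕ → ℝ) h]
    ring
  · have e1 : min (l+1) (p+l-1) + 1 - (p+k+1) = k + 1 - p := by omega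
    have e2 : p-k-1 + 1 - max 1 (p+1-l) = 0 := by omega
    rw [e1, e2, if_neg (show ¬ p = 1 by omega), if_neg (show ¬ p = k+1 by omega),
      if_neg (show ¬ p = l+1 by omega)]
    push_cast [Nat.cast_sub (show p ≤ k + 1 by omega)]
    rw [hlr]; ring
  · have e1 : min (l+1) (p+l-1) + 1 - (p+k+1) = 0 := by omega
    have e2 : p-k-1 + 1 - max 1 (p+1-l) = 0 := by omega
    rw [e1, e2, if_neg (show ¬ p = 1 by omega), if_pos (show p = k+1 by omega),
      if_neg (show ¬ p = l+1 by omega)]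
    push_cast
    rw [hlr, show (p:ℝ) = (k:ℝ) + 1 by rw [show p = k+1 from h]; push_cast; ring]
    ring
  · have e1 : min (l+1) (p+l-1) + 1 - (p+k+1) = 0 := by omega
    have e2 : p-k-1 + 1 - max 1 (p+1-l) = p - (k+1) := by omega
    rw [e1, e2, if_neg (show ¬ p = 1 by omega), if_neg (show ¬ p = k+1 by omega),
      if_neg (show ¬ p = l+1 by omega)]
    push_cast [Nat.cast_sub (show k + 1 ≤ p by omega)]
    rw [hlr]; ring
  · have e1 : min (l+1) (p+l-1) + 1 - (p+k+1) = 0 := by omega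
    have e2 : p-k-1 + 1 - max 1 (p+1-l) = k - 1 := by omega
    rw [e1, e2, if_neg (show ¬ p = 1 by omega), if_neg (show ¬ p = k+1 by omega),
      if_pos (show p = l+1 by omega)]
    push_cast [Nat.cast_sub hk]
    rw [hlr, show (p:ℝ) = 2*(k:ℝ) + 1 by rw [show p = 2*k+1 from h]; push_cast; ring]
    ring

lemma part1 (k l : ℕ) (hk : 1 ≤ k) (hl : l = 2 * k) :
    ((∑ i ∈ Finset.Icc 1 (l + 1), ((l : ℝ) + 2 - 2 * i) • eps (l + 1) i)
      = (2 : ℝ) • (∑ i ∈ Finset.Icc 1 (l + 1), ∑ j ∈ Finset.Icc (i + 1) (l + 1),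
            if k < j - i ∧ j - i < l then eps (l + 1) i - eps (l + 1) j else 0)
        + (2 : ℝ) • (eps (l + 1) 1 - eps (l + 1) (k + 1))
        + (2 : ℝ) • (eps (l + 1) (k + 1) - eps (l + 1) (l + 1))) := by
  funext a
  have hpa : (a : ℕ) < l + 1 := a.isLt
  simp only [Finset.sum_apply, Pi.add_apply, Pi.smul_apply, Pi.sub_apply, smul_eq_mul,
    apply_ite (fun f : Fin (l+1) → ℝ => f a), Pi.zero_apply, eps]
  exact scalar k l ((a:ℕ)+1) hk hl (by omega) (by omega)

/-- Type `A_l`, `l = 2k` even. -/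

theorem stmt_12 (k l : ℕ) (hk : 1 ≤ k) (hl : l = 2 * k) :
    ((∑ i ∈ Finset.Icc 1 (l + 1), ((l : ℝ) + 2 - 2 * i) • eps (l + 1) i)
      = (2 : ℝ) • (∑ i ∈ Finset.Icc 1 (l + 1), ∑ j ∈ Finset.Icc (i + 1) (l + 1),
            if k < j - i ∧ j - i < l then eps (l + 1) i - eps (l + 1) j else 0)
        + (2 : ℝ) • (eps (l + 1) 1 - eps (l + 1) (k + 1))
        + (2 : ℝ) • (eps (l + 1) (k + 1) - eps (l + 1) (l + 1))) ∧
    (Submodule.span ℝ (PsiA_even l k) : Set (Fin (l + 1) → ℝ))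
      = {x : Fin (l + 1) → ℝ | ∑ i, x i = 0} ∧
    (∀ β ∈ PsiA_even l k, ∀ β' ∈ PsiA_even l k, β + β' ∈ PhiA (l + 1) →
      (β = eps (l + 1) 1 - eps (l + 1) (k + 1) ∧
        β' = eps (l + 1) (k + 1) - eps (l + 1) (l + 1)) ∨
      (β = eps (l + 1) (k + 1) - eps (l + 1) (l + 1) ∧
        β' = eps (l + 1) 1 - eps (l + 1) (k + 1))) := by
  exact ⟨part1 k l hk hl, part2 k l hk hl, part3 k l hk hl⟩
end

section
/- Let n ≥ 1 and k ≥ 1 be integers, and let Y_1, …, Y_k be nonzero vectors in ℝ^n. Then there exists a function f : ℝ^n → ℝ of class C^1, with compact support, not identically zero, such that for every index i ∈ {1,…,k} and every x ∈ ℝ^n, ∫_{t∈ℝ} f(x + t·Y_i) dt = 0. -/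
open MeasureTheory Topology

set_option linter.unusedSectionVars false

section Aux

variable {E : Type*} [NormedAddCommGroup E] [NormedSpace ℝ E] [FiniteDimensional ℝ E]

lemma line_closedEmbedding (x v : E) (hv : v ≠ 0) :
    IsClosedEmbedding (fun t : ℝ => x + t • v) := by
  have h1 : IsClosedEmbedding (fun t : ℝ => t • v) := by
    refine (LinearMap.toSpanSingleton ℝ E v).isClosedEmbedding_of_injective ?_
    rw [LinearMap.ker_eq_bot]
    intro a b hab
    exact smul_left_injective ℝ hv hab
  exact (Homeomorph.addLeft x).isClosedEmbedding.comp h1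

lemma line_integrable {h : E → ℝ} (hc : Continuous h) (hs : HasCompactSupport h)
    (x v : E) (hv : v ≠ 0) : Integrable (fun t : ℝ => h (x + t • v)) := by
  have hcs : HasCompactSupport (fun t : ℝ => h (x + t • v)) :=
    hs.comp_isClosedEmbedding (line_closedEmbedding x v hv)
  exact (hc.comp (by continuity)).integrable_of_hasCompactSupport hcs

/-- difference operator in direction `v` -/
noncomputable def diffOp (v : E) (h : E → ℝ) : E → ℝ := fun x => h (x + v) - h x

lemma diffOp_contDiff {v : E} {h : E → ℝ} (hd : ContDiff ℝ 1 h) :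
    ContDiff ℝ 1 (diffOp v h) :=
  (hd.comp (contDiff_id.add contDiff_const)).sub hd

lemma diffOp_compactSupport {v : E} {h : E → ℝ} (hs : HasCompactSupport h) :
    HasCompactSupport (diffOp v h) := by
  have h1 : HasCompactSupport (fun x : E => h (x + v)) :=
    hs.comp_isClosedEmbedding (Homeomorph.addRight v).isClosedEmbedding
  exact h1.comp₂_left hs (sub_zero (0:ℝ))

lemma diffOp_ne_zero {v : E} {h : E → ℝ} (hs : HasCompactSupport h) (hv : v ≠ 0)
    (hne : h ≠ 0) : diffOp v h ≠ 0 := by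
  intro h0
  have hper : ∀ x : E, h (x + v) = h x := by
    intro x
    have := congrFun h0 x
    simpa [diffOp, sub_eq_zero] using this
  have hiter : ∀ (x : E) (m : ℕ), h (x + (m : ℝ) • v) = h x := by
    intro x m
    induction m with
    | zero => simp
    | succ m ih =>
      have : x + ((m + 1 : ℕ) : ℝ) • v = (x + (m : ℝ) • v) + v := by
        push_cast
        rw [add_smul, one_smul, add_assoc]
      rw [this, hper, ih]
  apply hne
  ext x
  obtain ⟨R, hR⟩ := hs.isBounded.subset_closedBall 0
  have hv' : 0 < ‖v‖ := norm_pos_iff.mpr hv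
  obtain ⟨m, hm⟩ := exists_nat_gt ((R + ‖x‖) / ‖v‖)
  have hout : x + (m : ℝ) • v ∉ tsupport h := by
    intro hmem
    have h1 : ‖x + (m : ℝ) • v‖ ≤ R := by
      simpa [dist_eq_norm] using hR hmem
    have h2 : (m : ℝ) * ‖v‖ ≤ ‖x + (m : ℝ) • v‖ + ‖x‖ := by
      calc (m : ℝ) * ‖v‖ = ‖(m : ℝ) • v‖ := by
            rw [norm_smul, Real.norm_natCast]
        _ = ‖(x + (m : ℝ) • v) - x‖ := by rw [add_sub_cancel_left]
        _ ≤ ‖x + (m : ℝ) • v‖ + ‖x‖ := norm_sub_le _ _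
    have h3 : (R + ‖x‖) / ‖v‖ * ‖v‖ < (m : ℝ) * ‖v‖ :=
      mul_lt_mul_of_pos_right hm hv'
    rw [div_mul_cancel₀ _ (ne_of_gt hv')] at h3
    linarith
  have : h (x + (m : ℝ) • v) = 0 := image_eq_zero_of_notMem_tsupport hout
  rw [hiter x m] at this
  simp [this]

lemma diffOp_integral_self {v : E} {h : E → ℝ} (hc : Continuous h)
    (hs : HasCompactSupport h) (hv : v ≠ 0) (x : E) :
    ∫ t : ℝ, diffOp v h (x + t • v) = 0 := by
  have hint : Integrable (fun t : ℝ => h (x + t • v)) := line_integrable hc hs x v hv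
  have key : ∀ t : ℝ, diffOp v h (x + t • v) = h (x + (t + 1) • v) - h (x + t • v) := by
    intro t
    simp only [diffOp, add_smul, one_smul, add_assoc]
  simp only [key]
  rw [integral_sub (by simpa using hint.comp_add_right 1) hint]
  rw [integral_add_right_eq_self (fun t : ℝ => h (x + t • v)) 1]
  simp

lemma diffOp_integral_other {v w : E} {h : E → ℝ} (hc : Continuous h)
    (hs : HasCompactSupport h) (hw : w ≠ 0)
    (hI : ∀ x : E, ∫ t : ℝ, h (x + t • w) = 0) (x : E) :
    ∫ t : ℝ, diffOp v h (x + t • w) = 0 := by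
  have hint : Integrable (fun t : ℝ => h (x + t • w)) := line_integrable hc hs x w hw
  have hint2 : Integrable (fun t : ℝ => h ((x + v) + t • w)) :=
    line_integrable hc hs (x + v) w hw
  have key : ∀ t : ℝ, diffOp v h (x + t • w) = h ((x + v) + t • w) - h (x + t • w) := by
    intro t
    simp only [diffOp]
    congr 2
    abel
  simp only [key]
  rw [integral_sub hint2 hint, hI (x + v), hI x, sub_zero]

/-- iterated difference operator -/
noncomputable def iterDiff (v : ℕ → E) (h0 : E → ℝ) : ℕ → E → ℝ
  | 0 => h0
  | (m + 1) => diffOp (v m) (iterDiff v h0 m)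

end Aux

/-- Given finitely many nonzero vectors `Y_1, …, Y_k` in `ℝ^n`, there exists a nonzero
`C¹` compactly supported function `f : ℝ^n → ℝ` whose (Lebesgue) integral along every
line with direction one of the `Y_i` vanishes. -/
theorem stmt_14 (n k : ℕ) (hn : 1 ≤ n) (hk : 1 ≤ k)
    (Y : Fin k → EuclideanSpace ℝ (Fin n)) (hY : ∀ i, Y i ≠ 0) :
    ∃ f : EuclideanSpace ℝ (Fin n) → ℝ,
      ContDiff ℝ 1 f ∧ HasCompactSupport f ∧ f ≠ 0 ∧
      ∀ (i : Fin k) (x : EuclideanSpace ℝ (Fin n)), ∫ t : ℝ, f (x + t • Y i) = 0 := by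
  set v : ℕ → EuclideanSpace ℝ (Fin n) := fun m => if h : m < k then Y ⟨m, h⟩ else Y ⟨0, hk⟩ with hv_def
  have hv : ∀ m, v m ≠ 0 := by
    intro m
    by_cases h : m < k <;> simp [hv_def, h, hY]
  let b : ContDiffBump (0 : EuclideanSpace ℝ (Fin n)) := ⟨1, 2, one_pos, one_lt_two⟩
  set g : ℕ → EuclideanSpace ℝ (Fin n) → ℝ := iterDiff v b with hg_def
  have main : ∀ m : ℕ, ContDiff ℝ 1 (g m) ∧ HasCompactSupport (g m) ∧ g m ≠ 0 ∧
      ∀ j < m, ∀ x : EuclideanSpace ℝ (Fin n), ∫ t : ℝ, g m (x + t • v j) = 0 := by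
    intro m
    induction m with
    | zero =>
      refine ⟨b.contDiff.of_le (by exact_mod_cast le_top), b.hasCompactSupport, ?_, by omega⟩
      intro h0
      have := congrFun h0 0
      simp only [Pi.zero_apply] at this
      have h1 : (b : EuclideanSpace ℝ (Fin n) → ℝ) 0 = 1 := b.one_of_mem_closedBall (by simp [b.rIn_pos.le])
      rw [hg_def] at this
      simp only [iterDiff] at this
      rw [h1] at this
      exact one_ne_zero this
    | succ m ih =>
      obtain ⟨hd, hs, hne, hI⟩ := ih
      have hgm : g (m + 1) = diffOp (v m) (g m) := rfl
      refine ⟨hgm ▸ diffOp_contDiff hd, hgm ▸ diffOp_compactSupport hs,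
        hgm ▸ diffOp_ne_zero hs (hv m) hne, ?_⟩
      intro j hj x
      rw [hgm]
      rcases Nat.lt_succ_iff_lt_or_eq.mp hj with hj' | hj'
      · exact diffOp_integral_other hd.continuous hs (hv j) (hI j hj') x
      · rw [hj']
        exact diffOp_integral_self hd.continuous hs (hv m) x
  obtain ⟨hd, hs, hne, hI⟩ := main k
  refine ⟨g k, hd, hs, hne, ?_⟩
  intro i x
  have : Y i = v i.val := by simp [hv_def, i.isLt]
  rw [this]
  exact hI i.val i.isLt x
end

section
/- Let (C^{k,ℓ})_{(k,ℓ)∈ℕ×ℕ} be a family of topological real vector spaces (topological additive groups with continuous scalar multiplication), equipped with continuous linear maps d′_{k,ℓ} : C^{k,ℓ} → C^{k+1,ℓ} and d″_{k,ℓ} : C^{k,ℓ} → C^{k,ℓ+1} satisfying d′∘d′ = 0, d″∘d″ = 0 and d′∘d″ + d″∘d′ = 0. For each ℓ let E^ℓ = ker(d′_{0,ℓ}) ⊆ C^{0,ℓ}, with inclusion ι_ℓ : E^ℓ → C^{0,ℓ} (d″ maps E^ℓ into E^{ℓ+1}, so (E^•, d″) is a complex). Assume that for every ℓ the column complex (C^{•,ℓ},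 d′) retracts by deformation onto the subcomplex equal to E^ℓ in degree 0 and zero in positive degrees; explicitly, assume there exist continuous linear maps r_ℓ : C^{0,ℓ} → E^ℓ with r_ℓ ∘ ι_ℓ = id_{E^ℓ}, and continuous linear maps h_{k,ℓ} : C^{k,ℓ} → C^{k−1,ℓ} (k ≥ 1) with h_{1,ℓ} ∘ d′_{0,ℓ} = ι_ℓ ∘ r_ℓ − id on C^{0,ℓ} and d′_{k−1,ℓ} ∘ h_{k,ℓ} + h_{k+1,ℓ} ∘ d′_{k,ℓ} = −id on C^{k,ℓ} for every k ≥ 1. Form the total complex D^m = ⊕_{k+ℓ=m} C^{k,ℓ} with differential d_D = d′ + d″, and regard E^m as a subspace of D^m via the summand C^{0,m}, with inclusion ι̃_m : E^m → D^m. Then (D^•, d_D) retracts by deformation onto (E^•, d″): there exist continuous linear maps R_m : D^m → E^m and H_m : D^m → D^{m−1} (m ≥ 1) such that R_m ∘ ι̃_m = id_{E^m}, R_{m+1} ∘ d_D = d″ ∘ R_m for every m, ι̃_m ∘ R_m − id_{D^m} = d_D ∘ H_m + H_{m+1} ∘ d_D for every m ≥ 1, and ι̃_0 ∘ R_0 −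 id_{D^0} = H_1 ∘ d_D on D^0. -/
universe u

/-- Cast between the components of a doubly-indexed family along index equalities. -/
def castC (C : ℕ → ℕ → Type u) {a b a' b' : ℕ} (h1 : a = a') (h2 : b = b')
    (x : C a b) : C a' b' :=
  cast (by rw [h1, h2]) x

/-- The degree-`m` component `D^m = ⊕_{k+ℓ=m} C^{k,ℓ}` of the total complex: the finite
product, over `k : Fin (m+1)` (with `ℓ = m - k`), of the `C^{k,ℓ}`, with the product
topology (and componentwise module structure). -/
abbrev TotalC (C : ℕ → ℕ → Type u) (m : ℕ) : Type u :=
  ∀ k : Fin (m + 1), C k.val (m - k.val)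

/-- The total differential `d_D = d' + d''` of the double complex. -/
def dD (C : ℕ → ℕ → Type u) [∀ k l, AddCommGroup (C k l)] [∀ k l, Module ℝ (C k l)]
    [∀ k l, TopologicalSpace (C k l)]
    (d' : ∀ k l, C k l →L[ℝ] C (k + 1) l) (d'' : ∀ k l, C k l →L[ℝ] C k (l + 1))
    (m : ℕ) (x : TotalC C m) : TotalC C (m + 1) := fun k =>
  have hkv : (k : ℕ) < m + 2 := k.isLt
  (if h : (k : ℕ) ≤ m then
      castC C rfl (by omega)
        (d'' (k : ℕ) (m - (k : ℕ)) (x ⟨(k : ℕ), by omega⟩))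
    else 0)
  + (if h : 1 ≤ (k : ℕ) then
      castC C (by omega) (by omega)
        (d' ((k : ℕ) - 1) (m - ((k : ℕ) - 1)) (x ⟨(k : ℕ) - 1, by omega⟩))
    else 0)

/-- The inclusion `ι̃_m : E^m ⊆ C^{0,m} → D^m` of the `k = 0` summand in the total
complex. -/
def incl0 (C : ℕ → ℕ → Type u) [∀ k l, AddCommGroup (C k l)]
    (m : ℕ) (x : C 0 m) : TotalC C m := fun k =>
  if h : (k : ℕ) = 0 then castC C h.symm (by omega) x else 0

set_option linter.unusedSectionVars false

section Aux
variable (C : ℕ → ℕ → Type u)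

theorem castC_self {a b : ℕ} (h1 : a = a) (h2 : b = b) (x : C a b) :
    castC C h1 h2 x = x := rfl

theorem castC_trans {a b a' b' a'' b'' : ℕ} (h1 : a = a') (h2 : b = b')
    (h1' : a' = a'') (h2' : b' = b'') (x : C a b) :
    castC C h1' h2' (castC C h1 h2 x) = castC C (h1.trans h1') (h2.trans h2') x := by
  subst h1; subst h2; subst h1'; subst h2'; rfl

variable [∀ k l, AddCommGroup (C k l)] [∀ k l, Module ℝ (C k l)]
  [∀ k l, TopologicalSpace (C k l)] [∀ k l, IsTopologicalAddGroup (C k l)]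
  [∀ k l, ContinuousSMul ℝ (C k l)]

theorem castC_add {a b a' b' : ℕ} (h1 : a = a') (h2 : b = b') (x y : C a b) :
    castC C h1 h2 (x + y) = castC C h1 h2 x + castC C h1 h2 y := by
  subst h1; subst h2; rfl

theorem castC_zero {a b a' b' : ℕ} (h1 : a = a') (h2 : b = b') :
    castC C h1 h2 (0 : C a b) = 0 := by subst h1; subst h2; rfl

theorem castC_neg {a b a' b' : ℕ} (h1 : a = a') (h2 : b = b') (x : C a b) :
    castC C h1 h2 (-x) = -castC C h1 h2 x := by subst h1; subst h2; rfl

theorem castC_sub {a b a' b' : ℕ} (h1 : a = a') (h2 : b = b') (x y : C a b) :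
    castC C h1 h2 (x - y) = castC C h1 h2 x - castC C h1 h2 y := by
  subst h1; subst h2; rfl

def castL {a b a' b' : ℕ} (h1 : a = a') (h2 : b = b') : C a b →L[ℝ] C a' b' := by
  subst h1; subst h2; exact ContinuousLinearMap.id ℝ _

theorem castL_apply {a b a' b' : ℕ} (h1 : a = a') (h2 : b = b') (x : C a b) :
    castL C h1 h2 x = castC C h1 h2 x := by subst h1; subst h2; rfl

variable (d' : ∀ k l, C k l →L[ℝ] C (k + 1) l)
  (d'' : ∀ k l, C k l →L[ℝ] C k (l + 1))
  (r : ∀ l, C 0 l →L[ℝ] C 0 l)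
  (h : ∀ k l, C (k + 1) l →L[ℝ] C k l)

theorem cast_d' {a b a' b' : ℕ} (h1 : a = a') (h2 : b = b') (x : C a b) :
    d' a' b' (castC C h1 h2 x) = castC C (by rw [h1]) h2 (d' a b x) := by
  subst h1; subst h2; rfl

theorem cast_d'' {a b a' b' : ℕ} (h1 : a = a') (h2 : b = b') (x : C a b) :
    d'' a' b' (castC C h1 h2 x) = castC C h1 (by rw [h2]) (d'' a b x) := by
  subst h1; subst h2; rfl

theorem cast_h {a b a' b' : ℕ} (h1 : a + 1 = a' + 1) (h2 : b = b') (x : C (a + 1) b) :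
    h a' b' (castC C h1 h2 x) = castC C (by omega) h2 (h a b x) := by
  obtain rfl : a = a' := by omega
  subst h2; rfl

theorem cast_r {b b' : ℕ} (h1 : (0:ℕ) = 0) (h2 : b = b') (x : C 0 b) :
    r b' (castC C h1 h2 x) = castC C rfl h2 (r b x) := by
  subst h2; rfl

def deltaL (m : ℕ) : TotalC C m →L[ℝ] TotalC C (m + 1) :=
  ContinuousLinearMap.pi fun k : Fin (m + 2) =>
    if hk : (k : ℕ) ≤ m then
      (castL C rfl (by omega)).comp (((d'' k (m - k))).comp
        (ContinuousLinearMap.proj (R := ℝ) (⟨k, by omega⟩ : Fin (m + 1))))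
    else 0

def d1L (m : ℕ) : TotalC C m →L[ℝ] TotalC C (m + 1) :=
  ContinuousLinearMap.pi fun k : Fin (m + 2) =>
    if hk : 1 ≤ (k : ℕ) then
      (castL C (by omega) (by omega)).comp ((d' ((k:ℕ) - 1) (m - ((k:ℕ) - 1))).comp
        (ContinuousLinearMap.proj (R := ℝ) (⟨(k:ℕ) - 1, by omega⟩ : Fin (m + 1))))
    else 0

def HpL (m : ℕ) : TotalC C (m + 1) →L[ℝ] TotalC C m :=
  ContinuousLinearMap.pi fun k : Fin (m + 1) =>
    (castL C rfl (by omega)).comp ((h k ((m + 1) - ((k:ℕ) + 1))).comp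
      (ContinuousLinearMap.proj (R := ℝ) (⟨(k:ℕ) + 1, by omega⟩ : Fin (m + 2))))

def pL (m : ℕ) : TotalC C m →L[ℝ] C 0 m :=
  (r m).comp (ContinuousLinearMap.proj (R := ℝ) (⟨0, by omega⟩ : Fin (m + 1)))

def iLL (m : ℕ) : C 0 m →L[ℝ] TotalC C m :=
  ContinuousLinearMap.pi fun k : Fin (m + 1) =>
    if hk : (k : ℕ) = 0 then castL C hk.symm (by omega) else 0

def eL (m : ℕ) : TotalC C m →L[ℝ] TotalC C m := (iLL C m).comp (pL C r m)

def KL : ∀ m, TotalC C m →L[ℝ] TotalC C m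
  | 0 => 0
  | (m + 1) => (d1L C d' m).comp (HpL C h m)

def QL : ∀ m, TotalC C m →L[ℝ] TotalC C m
  | 0 => 0
  | (m + 1) => (deltaL C d'' m).comp (HpL C h m)

noncomputable def SigL (m : ℕ) : TotalC C m →L[ℝ] TotalC C m :=
  ∑ j ∈ Finset.range (m + 1), (QL C d'' h m) ^ j

noncomputable def RL (m : ℕ) : TotalC C m →L[ℝ] C 0 m :=
  (pL C r m).comp (SigL C d'' h m)

noncomputable def HL (m : ℕ) : TotalC C (m + 1) →L[ℝ] TotalC C m :=
  (HpL C h m).comp (SigL C d'' h (m + 1))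

-- component formulas
theorem deltaL_apply (m : ℕ) (x : TotalC C m) (k : Fin (m + 2)) :
    deltaL C d'' m x k =
      if hk : (k : ℕ) ≤ m then
        castC C rfl (by omega) (d'' k (m - k) (x ⟨k, by omega⟩))
      else 0 := by
  unfold deltaL
  rw [ContinuousLinearMap.pi_apply]
  split <;> simp [castL_apply]

theorem d1L_apply (m : ℕ) (x : TotalC C m) (k : Fin (m + 2)) :
    d1L C d' m x k =
      if hk : 1 ≤ (k : ℕ) then
        castC C (by omega) (by omega)
          (d' ((k:ℕ) - 1) (m - ((k:ℕ) - 1)) (x ⟨(k:ℕ) - 1, by omega⟩))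
      else 0 := by
  unfold d1L
  rw [ContinuousLinearMap.pi_apply]
  split <;> simp [castL_apply]

theorem HpL_apply (m : ℕ) (x : TotalC C (m + 1)) (k : Fin (m + 1)) :
    HpL C h m x k =
      castC C rfl (by omega)
        (h k ((m + 1) - ((k:ℕ) + 1)) (x ⟨(k:ℕ) + 1, by omega⟩)) := by
  unfold HpL
  rw [ContinuousLinearMap.pi_apply]
  simp [castL_apply]

theorem iLL_apply (m : ℕ) (x : C 0 m) (k : Fin (m + 1)) :
    iLL C m x k = if hk : (k : ℕ) = 0 then castC C hk.symm (by omega) x else 0 := by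
  unfold iLL
  rw [ContinuousLinearMap.pi_apply]
  split <;> simp [castL_apply]

theorem pL_apply (m : ℕ) (x : TotalC C m) :
    pL C r m x = r m (x ⟨0, by omega⟩) := rfl

theorem dD_eq (m : ℕ) (x : TotalC C m) :
    dD C d' d'' m x = deltaL C d'' m x + d1L C d' m x := by
  funext k
  show _ = deltaL C d'' m x k + d1L C d' m x k
  rw [deltaL_apply, d1L_apply, dD]

theorem incl0_eq (m : ℕ) (x : C 0 m) : incl0 C m x = iLL C m x := by
  funext k
  rw [iLL_apply, incl0]


-- mk-indexed component formulas
theorem deltaL_mk (m : ℕ) (x : TotalC C m) (j : ℕ) (hj : j < m + 1) (hj2 : j < m + 2) :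
    deltaL C d'' m x ⟨j, hj2⟩ = castC C rfl (by (try simp only [Fin.val_mk]); omega) (d'' j (m - j) (x ⟨j, hj⟩)) := by
  rw [deltaL_apply, dif_pos (show j ≤ m by (try simp only [Fin.val_mk]); omega)]

theorem deltaL_top (m : ℕ) (x : TotalC C m) (hj : m + 1 < m + 2) :
    deltaL C d'' m x ⟨m + 1, hj⟩ = 0 := by
  rw [deltaL_apply, dif_neg (by (try simp only [Fin.val_mk]); omega)]

theorem d1L_mk (m : ℕ) (x : TotalC C m) (j : ℕ) (hj : j + 1 < m + 2) :
    d1L C d' m x ⟨j + 1, hj⟩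
      = castC C rfl (by (try simp only [Fin.val_mk]); omega) (d' j (m - j) (x ⟨j, by (try simp only [Fin.val_mk]); omega⟩)) := by
  rw [d1L_apply, dif_pos (show 1 ≤ j + 1 by (try simp only [Fin.val_mk]); omega)]
  rfl

theorem d1L_zero (m : ℕ) (x : TotalC C m) (h0 : 0 < m + 2) :
    d1L C d' m x ⟨0, h0⟩ = 0 := by
  rw [d1L_apply, dif_neg (by (try simp only [Fin.val_mk]); omega)]

theorem HpL_mk (m : ℕ) (x : TotalC C (m + 1)) (j : ℕ) (hj : j < m + 1) :
    HpL C h m x ⟨j, hj⟩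
      = castC C rfl (by (try simp only [Fin.val_mk]); omega) (h j ((m + 1) - (j + 1)) (x ⟨j + 1, by (try simp only [Fin.val_mk]); omega⟩)) := by
  rw [HpL_apply]

theorem iLL_zero (m : ℕ) (x : C 0 m) (h0 : 0 < m + 1) :
    iLL C m x ⟨0, h0⟩ = x := by
  rw [iLL_apply, dif_pos (show ((⟨0, h0⟩ : Fin (m+1)) : ℕ) = 0 from rfl)]
  rfl

theorem iLL_pos (m : ℕ) (x : C 0 m) (j : ℕ) (hj : j + 1 < m + 1) :
    iLL C m x ⟨j + 1, hj⟩ = 0 := by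
  rw [iLL_apply, dif_neg (by (try simp only [Fin.val_mk]); omega)]

-- CL1 : d1 ∘ d1 = 0
theorem CL1 (hd'd' : ∀ k l (x : C k l), d' (k + 1) l (d' k l x) = 0)
    (m : ℕ) (x : TotalC C m) : d1L C d' (m + 1) (d1L C d' m x) = 0 := by
  funext k
  obtain ⟨kv, hkv⟩ := k
  show d1L C d' (m + 1) (d1L C d' m x) ⟨kv, hkv⟩ = 0
  match kv, hkv with
  | 0, hkv => rw [d1L_zero]
  | 1, hkv =>
    rw [d1L_mk, d1L_zero, map_zero, castC_zero]
  | (j+2), hkv =>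
    rw [d1L_mk, d1L_mk, cast_d' C d', castC_trans, hd'd', castC_zero]


-- CL2 : delta ∘ delta = 0
theorem CL2 (hd''d'' : ∀ k l (x : C k l), d'' k (l + 1) (d'' k l x) = 0)
    (m : ℕ) (x : TotalC C m) : deltaL C d'' (m + 1) (deltaL C d'' m x) = 0 := by
  funext k
  obtain ⟨kv, hkv⟩ := k
  show deltaL C d'' (m + 1) (deltaL C d'' m x) ⟨kv, hkv⟩ = 0
  by_cases h1 : kv ≤ m
  · rw [deltaL_mk C d'' (m+1) _ kv (by omega) hkv,
      deltaL_mk C d'' m x kv (by omega) (by omega),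
      cast_d'' C d'', castC_trans, hd''d'', castC_zero]
  · by_cases h2 : kv = m + 1
    · subst h2
      rw [deltaL_mk C d'' (m+1) _ (m+1) (by omega) hkv,
        deltaL_top C d'' m x (by omega), map_zero, castC_zero]
    · obtain rfl : kv = m + 2 := by omega
      rw [deltaL_top C d'' (m+1) _ hkv]

-- CL3 : d1 ∘ delta + delta ∘ d1 = 0
theorem CL3 (hanti : ∀ k l (x : C k l),
      d' k (l + 1) (d'' k l x) + d'' (k + 1) l (d' k l x) = 0)
    (m : ℕ) (x : TotalC C m) :
    d1L C d' (m + 1) (deltaL C d'' m x) + deltaL C d'' (m + 1) (d1L C d' m x) = 0 := by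
  funext k
  obtain ⟨kv, hkv⟩ := k
  show d1L C d' (m + 1) (deltaL C d'' m x) ⟨kv, hkv⟩
      + deltaL C d'' (m + 1) (d1L C d' m x) ⟨kv, hkv⟩ = 0
  match kv, hkv with
  | 0, hkv =>
    rw [d1L_zero, deltaL_mk C d'' (m+1) _ 0 (by omega) hkv, d1L_zero, map_zero,
      castC_zero, add_zero]
  | (j+1), hkv =>
    by_cases hjm : j ≤ m
    · rw [d1L_mk C d' (m+1) _ j hkv, deltaL_mk C d'' m x j (by omega) (by omega),
        deltaL_mk C d'' (m+1) _ (j+1) (by omega) hkv,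
        d1L_mk C d' m x j (by omega),
        cast_d' C d', cast_d'' C d'', castC_trans, castC_trans, ← castC_add,
        hanti, castC_zero]
    · obtain rfl : j = m + 1 := by omega
      rw [d1L_mk C d' (m+1) _ (m+1) hkv, deltaL_top C d'' m x (by omega),
        deltaL_top C d'' (m+1) _ hkv, map_zero, castC_zero, add_zero]

-- CL4 : Hp ∘ d1 + K = e - 1
theorem CL4 (hh0 : ∀ l (x : C 0 l), h 0 l (d' 0 l x) = r l x - x)
    (hhk : ∀ k l (x : C (k + 1) l),
      d' k l (h k l x) + h (k + 1) l (d' (k + 1) l x) = -x)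
    (M : ℕ) (x : TotalC C M) :
    HpL C h M (d1L C d' M x) + KL C d' h M x = eL C r M x - x := by
  funext k
  obtain ⟨kv, hkv⟩ := k
  show HpL C h M (d1L C d' M x) ⟨kv, hkv⟩ + KL C d' h M x ⟨kv, hkv⟩
      = (eL C r M x - x) ⟨kv, hkv⟩
  have he : (eL C r M x - x) ⟨kv, hkv⟩
      = iLL C M (r M (x ⟨0, by omega⟩)) ⟨kv, hkv⟩ - x ⟨kv, hkv⟩ := rfl
  rw [he]
  rw [HpL_mk C h M _ kv hkv, d1L_mk C d' M x kv (by omega), cast_h C h, castC_trans,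
    castC_self]
  match M, hkv, x with
  | 0, hkv, x =>
    match kv, hkv with
    | 0, hkv =>
      have hK : KL C d' h 0 x ⟨0, hkv⟩ = 0 := rfl
      rw [hK, add_zero, iLL_zero, hh0]
  | (m+1), hkv, x =>
    have hK : KL C d' h (m+1) x = d1L C d' m (HpL C h m x) := rfl
    rw [hK]
    match kv, hkv with
    | 0, hkv =>
      rw [d1L_zero, add_zero, iLL_zero, hh0]
      rfl
    | (j+1), hkv =>
      rw [d1L_mk C d' m _ j hkv, HpL_mk C h m x j (by omega), cast_d' C d',
        castC_trans, castC_self, iLL_pos, zero_sub,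
        ← hhk j (m + 1 - (j + 1)) (x ⟨j + 1, by omega⟩)]
      exact add_comm _ _

-- CL6 : Hp ∘ delta ∘ e = 0
theorem CL6 (M : ℕ) (x : TotalC C M) :
    HpL C h M (deltaL C d'' M (eL C r M x)) = 0 := by
  funext k
  obtain ⟨kv, hkv⟩ := k
  show HpL C h M (deltaL C d'' M (eL C r M x)) ⟨kv, hkv⟩ = 0
  rw [HpL_mk C h M _ kv hkv]
  have he : eL C r M x = iLL C M (r M (x ⟨0, by omega⟩)) := rfl
  by_cases h1 : kv + 1 ≤ M
  · rw [he, deltaL_mk C d'' M _ (kv+1) (by omega) (by omega), iLL_pos, map_zero,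
      castC_zero, map_zero, castC_zero]
  · obtain rfl : M = kv := by omega
    rw [he, deltaL_top C d'' M _ (by omega), map_zero, castC_zero]

-- CL10 : p ∘ d1 = 0
theorem CL10 (m : ℕ) (x : TotalC C m) : pL C r (m + 1) (d1L C d' m x) = 0 := by
  rw [pL_apply, d1L_zero, map_zero]

-- CL11 : p ∘ delta ∘ e = d'' ∘ p
theorem CL11 (hanti : ∀ k l (x : C k l),
      d' k (l + 1) (d'' k l x) + d'' (k + 1) l (d' k l x) = 0)
    (hr_ker : ∀ l (x : C 0 l), d' 0 l (r l x) = 0)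
    (hr_id : ∀ l (x : C 0 l), d' 0 l x = 0 → r l x = x)
    (m : ℕ) (x : TotalC C m) :
    pL C r (m + 1) (deltaL C d'' m (eL C r m x)) = d'' 0 m (pL C r m x) := by
  have he : eL C r m x = iLL C m (r m (x ⟨0, by omega⟩)) := rfl
  rw [pL_apply, he, deltaL_mk C d'' m _ 0 (by omega) (by omega), iLL_zero, castC_self]
  rw [pL_apply]
  apply hr_id
  have h2 := hanti 0 (m - 0) (r (m - 0) (x ⟨0, by omega⟩))
  rw [hr_ker, map_zero, add_zero] at h2
  exact h2

-- CL12 : Hp ∘ iL = 0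
theorem CL12 (M : ℕ) (z : C 0 (M + 1)) : HpL C h M (iLL C (M + 1) z) = 0 := by
  funext k
  obtain ⟨kv, hkv⟩ := k
  show HpL C h M (iLL C (M + 1) z) ⟨kv, hkv⟩ = 0
  rw [HpL_mk C h M _ kv hkv, iLL_pos, map_zero, castC_zero]

-- CL13 : p ∘ iL = r
theorem CL13 (M : ℕ) (z : C 0 M) : pL C r M (iLL C M z) = r M z := by
  rw [pL_apply, iLL_zero]


-- support/nilpotency
theorem supp (M : ℕ) (j : ℕ) : ∀ (x : TotalC C M) (k : Fin (M + 1)),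
    M < (k : ℕ) + j → ((QL C d'' h M) ^ j) x k = 0 := by
  match M with
  | 0 =>
    match j with
    | 0 =>
      intro x k hk
      exact absurd k.isLt (by omega)
    | (j+1) =>
      intro x k hk
      rw [pow_succ, ContinuousLinearMap.mul_apply]
      have h0 : QL C d'' h 0 x = 0 := rfl
      rw [h0, map_zero]
      rfl
  | (m+1) =>
    induction j with
    | zero =>
      intro x k hk
      exact absurd k.isLt (by omega)
    | succ j ih =>
      intro x k hk
      obtain ⟨kv, hkv⟩ := k
      replace hk : m + 1 < kv + (j + 1) := hk
      rw [pow_succ', ContinuousLinearMap.mul_apply]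
      have hQ : QL C d'' h (m+1) (((QL C d'' h (m+1)) ^ j) x)
          = deltaL C d'' m (HpL C h m (((QL C d'' h (m+1)) ^ j) x)) := rfl
      rw [hQ]
      by_cases h1 : kv ≤ m
      · rw [deltaL_mk C d'' m _ kv (by omega) hkv,
          HpL_mk C h m _ kv (by omega),
          ih x ⟨kv + 1, by omega⟩ (show m + 1 < kv + 1 + j by omega),
          map_zero, castC_zero, map_zero, castC_zero]
      · obtain rfl : kv = m + 1 := by omega
        rw [deltaL_top C d'' m _ hkv]

theorem CL14 (M : ℕ) : (QL C d'' h M) ^ (M + 1) = 0 := by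
  ext x k
  show ((QL C d'' h M) ^ (M + 1)) x k = 0
  exact supp C d'' h M (M + 1) x k (by omega)

-- geometric series identities
theorem Gq1 (M : ℕ) (x : TotalC C M) :
    QL C d'' h M (SigL C d'' h M x) = SigL C d'' h M x - x := by
  have h1 : (QL C d'' h M - 1) * SigL C d'' h M = -1 := by
    rw [SigL, mul_geom_sum, CL14]
    simp
  have h2 := DFunLike.congr_fun h1 x
  rw [sub_mul, one_mul] at h2
  rw [ContinuousLinearMap.sub_apply, ContinuousLinearMap.mul_apply] at h2
  rw [ContinuousLinearMap.neg_apply, ContinuousLinearMap.one_apply] at h2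
  have := sub_eq_iff_eq_add.mp h2
  rw [this]; abel

theorem Gq2 (M : ℕ) (x : TotalC C M) :
    SigL C d'' h M (QL C d'' h M x) = SigL C d'' h M x - x := by
  have h1 : SigL C d'' h M * (QL C d'' h M - 1) = -1 := by
    rw [SigL, geom_sum_mul, CL14]
    simp
  have h2 := DFunLike.congr_fun h1 x
  rw [mul_sub, mul_one] at h2
  rw [ContinuousLinearMap.sub_apply, ContinuousLinearMap.mul_apply] at h2
  rw [ContinuousLinearMap.neg_apply, ContinuousLinearMap.one_apply] at h2
  have := sub_eq_iff_eq_add.mp h2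
  rw [this]; abel

-- Sig fixes elements killed by Q
theorem Sig_fix (M : ℕ) (y : TotalC C M) (hy : QL C d'' h M y = 0) :
    SigL C d'' h M y = y := by
  rw [SigL, ContinuousLinearMap.sum_apply]
  rw [Finset.sum_eq_single 0]
  · rw [pow_zero, ContinuousLinearMap.one_apply]
  · intro j hj hne
    obtain ⟨i, rfl⟩ : ∃ i, j = i + 1 := ⟨j - 1, by omega⟩
    rw [pow_succ, ContinuousLinearMap.mul_apply, hy, map_zero]
  · intro hmem
    exact absurd (Finset.mem_range.mpr (by omega)) hmem

-- CL9 : Q kills delta ∘ e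
theorem CL9 (M : ℕ) (x : TotalC C M) :
    QL C d'' h (M + 1) (deltaL C d'' M (eL C r M x)) = 0 := by
  have hQ : QL C d'' h (M+1) (deltaL C d'' M (eL C r M x))
      = deltaL C d'' M (HpL C h M (deltaL C d'' M (eL C r M x))) := rfl
  rw [hQ, CL6, map_zero]

-- Q kills iL
theorem QiL (M : ℕ) (z : C 0 M) : QL C d'' h M (iLL C M z) = 0 := by
  match M with
  | 0 => rfl
  | (m+1) =>
    have hQ : QL C d'' h (m+1) (iLL C (m+1) z)
        = deltaL C d'' m (HpL C h m (iLL C (m+1) z)) := rfl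
    rw [hQ, CL12, map_zero]

-- G2 : Sig fixes delta ∘ e
theorem G2 (M : ℕ) (x : TotalC C M) :
    SigL C d'' h (M + 1) (deltaL C d'' M (eL C r M x)) = deltaL C d'' M (eL C r M x) :=
  Sig_fix C d'' h (M + 1) _ (CL9 C d'' r h M x)

-- G4 : Sig fixes iL
theorem G4 (M : ℕ) (z : C 0 M) : SigL C d'' h M (iLL C M z) = iLL C M z :=
  Sig_fix C d'' h M _ (QiL C d'' h M z)

-- CL7 : delta ∘ Q = 0
theorem CL7 (hd''d'' : ∀ k l (x : C k l), d'' k (l + 1) (d'' k l x) = 0)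
    (M : ℕ) (w : TotalC C M) :
    deltaL C d'' M (QL C d'' h M w) = 0 := by
  match M with
  | 0 =>
    have : QL C d'' h 0 w = 0 := rfl
    rw [this, map_zero]
  | (m+1) =>
    have hQ : QL C d'' h (m+1) w = deltaL C d'' m (HpL C h m w) := rfl
    rw [hQ, CL2 C d'' hd''d'']

-- G3 : delta ∘ Sig = delta
theorem G3 (hd''d'' : ∀ k l (x : C k l), d'' k (l + 1) (d'' k l x) = 0)
    (M : ℕ) (x : TotalC C M) :
    deltaL C d'' M (SigL C d'' h M x) = deltaL C d'' M x := by
  rw [SigL, ContinuousLinearMap.sum_apply, map_sum]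
  rw [Finset.sum_eq_single 0]
  · rw [pow_zero, ContinuousLinearMap.one_apply]
  · intro j hj hne
    obtain ⟨i, rfl⟩ : ∃ i, j = i + 1 := ⟨j - 1, by omega⟩
    rw [pow_succ', ContinuousLinearMap.mul_apply, CL7 C d'' h hd''d'']
  · intro hmem
    exact absurd (Finset.mem_range.mpr (by omega)) hmem


theorem Sig0 (x : TotalC C 0) : SigL C d'' h 0 x = x := by
  rw [SigL]
  simp

-- R1 : Q ∘ d1 = delta ∘ e - delta + d1 ∘ Q
theorem R1 (hanti : ∀ k l (x : C k l),
      d' k (l + 1) (d'' k l x) + d'' (k + 1) l (d' k l x) = 0)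
    (hh0 : ∀ l (x : C 0 l), h 0 l (d' 0 l x) = r l x - x)
    (hhk : ∀ k l (x : C (k + 1) l),
      d' k l (h k l x) + h (k + 1) l (d' (k + 1) l x) = -x)
    (m : ℕ) (x : TotalC C m) :
    QL C d'' h (m + 1) (d1L C d' m x)
      = deltaL C d'' m (eL C r m x) - deltaL C d'' m x
        + d1L C d' m (QL C d'' h m x) := by
  have hQ : QL C d'' h (m+1) (d1L C d' m x)
      = deltaL C d'' m (HpL C h m (d1L C d' m x)) := rfl
  have h4 : HpL C h m (d1L C d' m x) = eL C r m x - x - KL C d' h m x :=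
    eq_sub_iff_add_eq.mpr (CL4 C d' r h hh0 hhk m x)
  have h8 : deltaL C d'' m (KL C d' h m x) = - d1L C d' m (QL C d'' h m x) := by
    match m with
    | 0 =>
      have h1 : KL C d' h 0 x = 0 := rfl
      have h2 : QL C d'' h 0 x = 0 := rfl
      rw [h1, h2, map_zero, map_zero, neg_zero]
    | (m+1) =>
      have h1 : KL C d' h (m+1) x = d1L C d' m (HpL C h m x) := rfl
      have h2 : QL C d'' h (m+1) x = deltaL C d'' m (HpL C h m x) := rfl
      rw [h1, h2]
      have h3 := CL3 C d' d'' hanti m (HpL C h m x)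
      linear_combination (norm := abel) h3
  rw [hQ, h4, map_sub, map_sub, h8]
  abel

-- star : Sig ∘ d1 = d1 ∘ Sig + delta ∘ e ∘ Sig - Sig ∘ delta
theorem star (hd''d'' : ∀ k l (x : C k l), d'' k (l + 1) (d'' k l x) = 0)
    (hanti : ∀ k l (x : C k l),
      d' k (l + 1) (d'' k l x) + d'' (k + 1) l (d' k l x) = 0)
    (hh0 : ∀ l (x : C 0 l), h 0 l (d' 0 l x) = r l x - x)
    (hhk : ∀ k l (x : C (k + 1) l),
      d' k l (h k l x) + h (k + 1) l (d' (k + 1) l x) = -x)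
    (m : ℕ) (x : TotalC C m) :
    SigL C d'' h (m + 1) (d1L C d' m x)
      = d1L C d' m (SigL C d'' h m x)
        + deltaL C d'' m (eL C r m (SigL C d'' h m x))
        - SigL C d'' h (m + 1) (deltaL C d'' m x) := by
  set u := SigL C d'' h m x with hu
  have hx : u - QL C d'' h m u = x := by rw [Gq1]; abel
  have e1 : SigL C d'' h (m+1) (d1L C d' m x)
      = SigL C d'' h (m+1) (d1L C d' m u)
        - SigL C d'' h (m+1) (d1L C d' m (QL C d'' h m u)) := by
    conv_lhs => rw [← hx]
    rw [map_sub, map_sub]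
  have e2 : d1L C d' m (QL C d'' h m u)
      = QL C d'' h (m+1) (d1L C d' m u) - deltaL C d'' m (eL C r m u)
        + deltaL C d'' m u := by
    have hR := R1 C d' d'' r h hanti hh0 hhk m u
    rw [hR]
    abel
  have e3 : SigL C d'' h (m+1) (QL C d'' h (m+1) (d1L C d' m u))
      = SigL C d'' h (m+1) (d1L C d' m u) - d1L C d' m u :=
    Gq2 C d'' h (m+1) (d1L C d' m u)
  have e4 : SigL C d'' h (m+1) (deltaL C d'' m (eL C r m u))
      = deltaL C d'' m (eL C r m u) := G2 C d'' r h m u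
  have e5 : deltaL C d'' m u = deltaL C d'' m x := G3 C d'' h hd''d'' m x
  rw [e1, e2, map_add, map_sub, e3, e4, e5]
  abel

-- T1 : R lands in ker d'
theorem T1 (hr_ker : ∀ l (x : C 0 l), d' 0 l (r l x) = 0)
    (m : ℕ) (x : TotalC C m) : d' 0 m (RL C d'' r h m x) = 0 := by
  have hR : RL C d'' r h m x = r m (SigL C d'' h m x ⟨0, by omega⟩) := rfl
  rw [hR]
  exact hr_ker m _

-- T2 : R ∘ incl0 = id on ker d'
theorem T2 (hr_id : ∀ l (x : C 0 l), d' 0 l x = 0 → r l x = x)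
    (m : ℕ) (x : C 0 m) (hx : d' 0 m x = 0) :
    RL C d'' r h m (incl0 C m x) = x := by
  rw [incl0_eq]
  have hR : RL C d'' r h m (iLL C m x)
      = pL C r m (SigL C d'' h m (iLL C m x)) := rfl
  rw [hR, G4, CL13]
  exact hr_id m x hx

-- T3 : chain map
theorem T3 (hd''d'' : ∀ k l (x : C k l), d'' k (l + 1) (d'' k l x) = 0)
    (hanti : ∀ k l (x : C k l),
      d' k (l + 1) (d'' k l x) + d'' (k + 1) l (d' k l x) = 0)
    (hr_ker : ∀ l (x : C 0 l), d' 0 l (r l x) = 0)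
    (hr_id : ∀ l (x : C 0 l), d' 0 l x = 0 → r l x = x)
    (hh0 : ∀ l (x : C 0 l), h 0 l (d' 0 l x) = r l x - x)
    (hhk : ∀ k l (x : C (k + 1) l),
      d' k l (h k l x) + h (k + 1) l (d' (k + 1) l x) = -x)
    (m : ℕ) (x : TotalC C m) :
    RL C d'' r h (m + 1) (dD C d' d'' m x) = d'' 0 m (RL C d'' r h m x) := by
  rw [dD_eq]
  have hR : ∀ y, RL C d'' r h (m+1) y = pL C r (m+1) (SigL C d'' h (m+1) y) :=
    fun _ => rfl
  rw [hR, map_add, star C d' d'' r h hd''d'' hanti hh0 hhk m x, map_add,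
    map_sub, map_add, CL10 C d' r m (SigL C d'' h m x),
    CL11 C d' d'' r hanti hr_ker hr_id m (SigL C d'' h m x)]
  have hR2 : RL C d'' r h m x = pL C r m (SigL C d'' h m x) := rfl
  rw [hR2]
  abel

-- T4 : homotopy in degree 0
theorem T4 (hr_ker : ∀ l (x : C 0 l), d' 0 l (r l x) = 0)
    (hd''d'' : ∀ k l (x : C k l), d'' k (l + 1) (d'' k l x) = 0)
    (hanti : ∀ k l (x : C k l),
      d' k (l + 1) (d'' k l x) + d'' (k + 1) l (d' k l x) = 0)
    (hh0 : ∀ l (x : C 0 l), h 0 l (d' 0 l x) = r l x - x)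
    (hhk : ∀ k l (x : C (k + 1) l),
      d' k l (h k l x) + h (k + 1) l (d' (k + 1) l x) = -x)
    (x : TotalC C 0) :
    incl0 C 0 (RL C d'' r h 0 x) - x = HL C d'' h 0 (dD C d' d'' 0 x) := by
  rw [dD_eq, incl0_eq]
  have hH : ∀ y, HL C d'' h 0 y = HpL C h 0 (SigL C d'' h 1 y) := fun _ => rfl
  rw [hH, map_add, star C d' d'' r h hd''d'' hanti hh0 hhk 0 x, Sig0,
    map_add, map_sub, map_add, CL6 C d'' r h 0 x]
  have h4 : HpL C h 0 (d1L C d' 0 x) = eL C r 0 x - x - KL C d' h 0 x :=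
    eq_sub_iff_add_eq.mpr (CL4 C d' r h hh0 hhk 0 x)
  have hK : KL C d' h 0 x = 0 := rfl
  rw [h4, hK]
  have hRL : RL C d'' r h 0 x = pL C r 0 (SigL C d'' h 0 x) := rfl
  have he : eL C r 0 x = iLL C 0 (pL C r 0 x) := rfl
  rw [hRL, Sig0, he]
  abel

-- T5 : homotopy in positive degrees
theorem T5 (hr_ker : ∀ l (x : C 0 l), d' 0 l (r l x) = 0)
    (hd''d'' : ∀ k l (x : C k l), d'' k (l + 1) (d'' k l x) = 0)
    (hanti : ∀ k l (x : C k l),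
      d' k (l + 1) (d'' k l x) + d'' (k + 1) l (d' k l x) = 0)
    (hh0 : ∀ l (x : C 0 l), h 0 l (d' 0 l x) = r l x - x)
    (hhk : ∀ k l (x : C (k + 1) l),
      d' k l (h k l x) + h (k + 1) l (d' (k + 1) l x) = -x)
    (m : ℕ) (x : TotalC C (m + 1)) :
    incl0 C (m + 1) (RL C d'' r h (m + 1) x) - x
      = dD C d' d'' m (HL C d'' h m x)
        + HL C d'' h (m + 1) (dD C d' d'' (m + 1) x) := by
  rw [dD_eq, dD_eq, incl0_eq]
  set u := SigL C d'' h (m+1) x with hu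
  have hH1 : HL C d'' h m x = HpL C h m u := rfl
  have hH2 : ∀ y, HL C d'' h (m+1) y = HpL C h (m+1) (SigL C d'' h (m+2) y) :=
    fun _ => rfl
  have hQu : deltaL C d'' m (HpL C h m u) = u - x := by
    have hq : deltaL C d'' m (HpL C h m u) = QL C d'' h (m+1) u := rfl
    rw [hq, hu, Gq1]
  have h4 : HpL C h (m+1) (d1L C d' (m+1) u)
      = eL C r (m+1) u - u - d1L C d' m (HpL C h m u) :=
    eq_sub_iff_add_eq.mpr (CL4 C d' r h hh0 hhk (m+1) u)
  have hRL : RL C d'' r h (m+1) x = pL C r (m+1) u := rfl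
  have he : eL C r (m+1) u = iLL C (m+1) (pL C r (m+1) u) := rfl
  rw [hH1, hH2, map_add, star C d' d'' r h hd''d'' hanti hh0 hhk (m+1) x,
    map_add, map_sub, map_add, CL6 C d'' r h (m+1) u, hQu, h4, hRL, he]
  abel

end Aux

/-- Pansu's double complex lemma: if each column `(C^{•,ℓ}, d')` of a double complex of
topological real vector spaces retracts by deformation onto `E^ℓ = ker d'_{0,ℓ}`
(concentrated in degree `0`), then the total complex `(D^•, d' + d'')` retracts by
deformation onto `(E^•, d'')`. -/
theorem stmt_16
    (C : ℕ → ℕ → Type u)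
    [∀ k l, AddCommGroup (C k l)] [∀ k l, Module ℝ (C k l)]
    [∀ k l, TopologicalSpace (C k l)] [∀ k l, IsTopologicalAddGroup (C k l)]
    [∀ k l, ContinuousSMul ℝ (C k l)]
    (d' : ∀ k l, C k l →L[ℝ] C (k + 1) l)
    (d'' : ∀ k l, C k l →L[ℝ] C k (l + 1))
    (hd'd' : ∀ k l (x : C k l), d' (k + 1) l (d' k l x) = 0)
    (hd''d'' : ∀ k l (x : C k l), d'' k (l + 1) (d'' k l x) = 0)
    (hanti : ∀ k l (x : C k l), d' k (l + 1) (d'' k l x) + d'' (k + 1) l (d' k l x) = 0)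
    -- the column retraction data: `r_ℓ : C^{0,ℓ} → E^ℓ` …
    (r : ∀ l, C 0 l →L[ℝ] C 0 l)
    (hr_ker : ∀ l (x : C 0 l), d' 0 l (r l x) = 0)
    (hr_id : ∀ l (x : C 0 l), d' 0 l x = 0 → r l x = x)
    -- … and the homotopies `h_{k+1,ℓ} : C^{k+1,ℓ} → C^{k,ℓ}`
    (h : ∀ k l, C (k + 1) l →L[ℝ] C k l)
    (hh0 : ∀ l (x : C 0 l), h 0 l (d' 0 l x) = r l x - x)
    (hhk : ∀ k l (x : C (k + 1) l),
      d' k l (h k l x) + h (k + 1) l (d' (k + 1) l x) = -x) :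
    ∃ (R : ∀ m, TotalC C m →L[ℝ] C 0 m)
      (H : ∀ m, TotalC C (m + 1) →L[ℝ] TotalC C m),
      -- `R_m` takes values in `E^m = ker d'_{0,m}`
      (∀ m (x : TotalC C m), d' 0 m (R m x) = 0) ∧
      -- `R_m ∘ ι̃_m = id` on `E^m`
      (∀ m (x : C 0 m), d' 0 m x = 0 → R m (incl0 C m x) = x) ∧
      -- `R` is a chain map: `R_{m+1} ∘ d_D = d'' ∘ R_m`
      (∀ m (x : TotalC C m), R (m + 1) (dD C d' d'' m x) = d'' 0 m (R m x)) ∧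
      -- homotopy in degree `0`: `ι̃_0 ∘ R_0 - id = H_1 ∘ d_D`
      (∀ x : TotalC C 0, incl0 C 0 (R 0 x) - x = H 0 (dD C d' d'' 0 x)) ∧
      -- homotopy in degree `m ≥ 1`: `ι̃ ∘ R - id = d_D ∘ H + H ∘ d_D`
      (∀ m (x : TotalC C (m + 1)),
        incl0 C (m + 1) (R (m + 1) x) - x
          = dD C d' d'' m (H m x) + H (m + 1) (dD C d' d'' (m + 1) x)) := by
  exact ⟨RL C d'' r h, HL C d'' h,
    T1 C d' d'' r h hr_ker,
    T2 C d' d'' r h hr_id,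
    T3 C d' d'' r h hd''d'' hanti hr_ker hr_id hh0 hhk,
    T4 C d' d'' r h hr_ker hd''d'' hanti hh0 hhk,
    T5 C d' d'' r h hr_ker hd''d'' hanti hh0 hhk⟩
end
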